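/- arXiv:math/0001091 — 3 statements merged into one kernel-verified Lean document; each statement's English description precedes it below -/
import Mathlib

section
/- The number of 132-avoiding permutations of length n is the n-th Catalan number C(n) = binomial(2n, n)/(n+1). -/
/-- Ordered (plane) trees: a root with a list of subtrees. -/
inductive OTree : Type where
  | node : List OTree → OTree

namespace OTree

/-- Number of edges of an ordered tree. -/
def edges : OTree → ℕ
  | node [] => 0
  | node (t :: ts) => edges t + 1 + edges (node ts)

/-- Multiset of levels (distances from the root) of the nonroot vertices. -/
def levels : OTree → Multiset ℕ
  | node [] => 0
  | node (t :: ts) => ((1 : ℕ) ::ₘ (levels t).map (· + 1)) + levels (node ts)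

/-- Sum of the levels of all vertices (the root contributes 0). -/
def levelsSum (t : OTree) : ℕ := t.levels.sum

/-- The permutation word of a tree, entries shifted up by `k`: nonroot
vertices are labeled `k+n, …, k+1` in preorder and read in postorder. -/
def wordFrom : OTree → ℕ → List ℕ
  | node [], _ => []
  | node (t :: ts), k =>
      wordFrom t (k + edges (node ts)) ++
        (k + edges (node (t :: ts))) :: wordFrom (node ts) k

/-- The permutation `π(T)` of an ordered tree, as a word on `1, …, n`. -/
def word (t : OTree) : List ℕ := wordFrom t 0

/-- The lattice-path word of a tree via preorder traversal:
`true` = east step (down an edge), `false` = north step (up an edge). -/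
def pathWord : OTree → List Bool
  | node [] => []
  | node (t :: ts) => true :: (pathWord t ++ false :: pathWord (node ts))

/-- The subtree rooted at the vertex reached by the child-index path `p`. -/
def subtreeAt? : OTree → List ℕ → Option OTree
  | t, [] => some t
  | node [], _ :: _ => none
  | node (t :: _), 0 :: p => subtreeAt? t p
  | node (_ :: ts), (i + 1) :: p => subtreeAt? (node ts) (i :: p)

/-- The list of child-index paths to the nonroot vertices, in preorder. -/
def paths : OTree → List (List ℕ)
  | node [] => []
  | node (t :: ts) =>
      ([0] :: (paths t).map (0 :: ·)) ++
        (paths (node ts)).map (fun p => match p with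
          | i :: q => (i + 1) :: q
          | [] => [])

/-- The preorder label of the nonroot vertex at path `p` (labels `n, …, 1`). -/
def labelOf (t : OTree) (p : List ℕ) : ℕ := t.edges - t.paths.idxOf p

end OTree

/-- Area under a lattice path word (`true` = east, `false` = north):
the sum over east steps of the number of north steps preceding them. -/
def pathArea : List Bool → ℕ
  | [] => 0
  | true :: w => pathArea w
  | false :: w => pathArea w + w.count true

/-- A word avoids the pattern 132. -/
def Avoids132W (w : List ℕ) : Prop :=
  ¬ ∃ i j k : ℕ, i < j ∧ j < k ∧ k < w.length ∧
      w.getD i 0 < w.getD k 0 ∧ w.getD k 0 < w.getD j 0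

/-- Number of increasing patterns of length `k` in a word: index sets on
which the word is strictly increasing. -/
def incCountW (w : List ℕ) (k : ℕ) : ℕ :=
  ((Finset.univ : Finset (Finset (Fin w.length))).filter
    (fun S => S.card = k ∧ ∀ i ∈ S, ∀ j ∈ S, i < j → w.get i < w.get j)).card

/-- A permutation of `Fin n` avoids the pattern 132. -/
def Avoids132P {n : ℕ} (π : Equiv.Perm (Fin n)) : Prop :=
  ¬ ∃ i j k : Fin n, i < j ∧ j < k ∧ π i < π k ∧ π k < π j

/-- Number of increasing patterns of length `k` in a permutation of `Fin n`. -/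
def incCountP {n : ℕ} (π : Equiv.Perm (Fin n)) (k : ℕ) : ℕ :=
  ((Finset.univ : Finset (Finset (Fin n))).filter
    (fun S => S.card = k ∧ ∀ i ∈ S, ∀ j ∈ S, i < j → π i < π j)).card

/-- A subdiagonal lattice path from `(0,0)` to `(n,n)`, as a sequence of
`2n` steps (`true` = east, `false` = north) with `n` east steps such that
every prefix has at least as many east steps as north steps. -/
def IsSubdiagPath (n : ℕ) (f : Fin (2 * n) → Bool) : Prop :=
  (Finset.univ.filter fun i => f i = true).card = n ∧
    ∀ m : ℕ, (Finset.univ.filter fun i : Fin (2 * n) => i.1 < m ∧ f i = false).card ≤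
      (Finset.univ.filter fun i : Fin (2 * n) => i.1 < m ∧ f i = true).card

/-- Area under a subdiagonal lattice path given as a step sequence. -/
def pathAreaF {n : ℕ} (f : Fin (2 * n) → Bool) : ℕ :=
  ∑ i ∈ Finset.univ.filter (fun i => f i = true),
    (Finset.univ.filter fun j : Fin (2 * n) => j < i ∧ f j = false).card

namespace Stmt14
open Equiv Finset

noncomputable def A (n : ℕ) : ℕ := Nat.card {π : Equiv.Perm (Fin n) // Avoids132P π}

def combFun {n m : ℕ} (hm : m ≤ n) (σ : Equiv.Perm (Fin m)) (τ : Equiv.Perm (Fin (n - m)))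
    (i : Fin (n + 1)) : Fin (n + 1) :=
  if h1 : i.1 < m then ⟨(n - m) + (σ ⟨i.1, h1⟩).1, by have := (σ ⟨i.1, h1⟩).isLt; omega⟩
  else if h2 : i.1 = m then ⟨n, by omega⟩
  else ⟨(τ ⟨i.1 - (m + 1), by have := i.isLt; omega⟩).1,
        by have := (τ ⟨i.1 - (m + 1), by have := i.isLt; omega⟩).isLt; omega⟩

lemma combFun_val_lt {n m : ℕ} (hm : m ≤ n) (σ : Equiv.Perm (Fin m)) (τ : Equiv.Perm (Fin (n - m)))
    (j : Fin m) (i : Fin (n + 1)) (h : i.1 = j.1) :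
    (combFun hm σ τ i).1 = (n - m) + (σ j).1 := by
  have h1 : i.1 < m := h ▸ j.isLt
  rw [combFun, dif_pos h1]
  exact congrArg (fun x => n - m + (σ x).1) (Fin.ext h)

lemma combFun_val_eq {n m : ℕ} (hm : m ≤ n) (σ : Equiv.Perm (Fin m)) (τ : Equiv.Perm (Fin (n - m)))
    (i : Fin (n + 1)) (h : i.1 = m) :
    (combFun hm σ τ i).1 = n := by
  rw [combFun, dif_neg (by omega), dif_pos h]

lemma combFun_val_gt {n m : ℕ} (hm : m ≤ n) (σ : Equiv.Perm (Fin m)) (τ : Equiv.Perm (Fin (n - m)))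
    (j : Fin (n - m)) (i : Fin (n + 1)) (h : i.1 = m + 1 + j.1) :
    (combFun hm σ τ i).1 = (τ j).1 := by
  rw [combFun, dif_neg (by omega), dif_neg (by omega)]
  exact congrArg (fun x => (τ x).1)
    (Fin.ext (show i.1 - (m + 1) = j.1 by omega))

lemma combFun_lb {n m : ℕ} (hm : m ≤ n) (σ : Equiv.Perm (Fin m)) (τ : Equiv.Perm (Fin (n - m)))
    {i : Fin (n + 1)} (h : i.1 < m) :
    (n - m) ≤ (combFun hm σ τ i).1 ∧ (combFun hm σ τ i).1 < n := by
  rw [combFun_val_lt hm σ τ ⟨i.1, h⟩ i rfl]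
  have := (σ ⟨i.1, h⟩).isLt
  omega

lemma combFun_ub {n m : ℕ} (hm : m ≤ n) (σ : Equiv.Perm (Fin m)) (τ : Equiv.Perm (Fin (n - m)))
    {i : Fin (n + 1)} (h : m < i.1) :
    (combFun hm σ τ i).1 < n - m := by
  have hj : i.1 - (m + 1) < n - m := by have := i.isLt; omega
  rw [combFun_val_gt hm σ τ ⟨i.1 - (m + 1), hj⟩ i
    (show i.1 = m + 1 + (i.1 - (m + 1)) by omega)]
  exact (τ ⟨i.1 - (m + 1), hj⟩).isLt

lemma combFun_injective {n m : ℕ} (hm : m ≤ n) (σ : Equiv.Perm (Fin m))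
    (τ : Equiv.Perm (Fin (n - m))) : Function.Injective (combFun hm σ τ) := by
  intro i j hij
  have hij' : (combFun hm σ τ i).1 = (combFun hm σ τ j).1 := congrArg Fin.val hij
  rcases lt_trichotomy i.1 m with hi | hi | hi <;> rcases lt_trichotomy j.1 m with hj | hj | hj
  · rw [combFun_val_lt hm σ τ ⟨i.1, hi⟩ i rfl, combFun_val_lt hm σ τ ⟨j.1, hj⟩ j rfl] at hij'
    have h2 : (⟨i.1, hi⟩ : Fin m) = ⟨j.1, hj⟩ := σ.injective (Fin.ext (by omega))
    have h3 := congrArg Fin.val h2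
    exact Fin.ext h3
  · have := combFun_lb hm σ τ hi
    rw [combFun_val_eq hm σ τ j hj] at hij'
    omega
  · have := combFun_lb hm σ τ hi
    have := combFun_ub hm σ τ hj
    omega
  · have := combFun_lb hm σ τ hj
    rw [combFun_val_eq hm σ τ i hi] at hij'
    omega
  · exact Fin.ext (hi.trans hj.symm)
  · have := combFun_ub hm σ τ hj
    rw [combFun_val_eq hm σ τ i hi] at hij'
    omega
  · have := combFun_lb hm σ τ hj
    have := combFun_ub hm σ τ hi
    omega
  · have := combFun_ub hm σ τ hi
    rw [combFun_val_eq hm σ τ j hj] at hij'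
    omega
  · have hi' : i.1 - (m + 1) < n - m := by have := i.isLt; omega
    have hj' : j.1 - (m + 1) < n - m := by have := j.isLt; omega
    rw [combFun_val_gt hm σ τ ⟨i.1 - (m + 1), hi'⟩ i
        (show i.1 = m + 1 + (i.1 - (m + 1)) by omega),
      combFun_val_gt hm σ τ ⟨j.1 - (m + 1), hj'⟩ j
        (show j.1 = m + 1 + (j.1 - (m + 1)) by omega)] at hij'
    have h2 : (⟨i.1 - (m + 1), hi'⟩ : Fin (n - m)) = ⟨j.1 - (m + 1), hj'⟩ :=
      τ.injective (Fin.ext hij')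
    have h3 : i.1 - (m + 1) = j.1 - (m + 1) := congrArg Fin.val h2
    exact Fin.ext (by omega)

noncomputable def comb {n m : ℕ} (hm : m ≤ n) (σ : Equiv.Perm (Fin m))
    (τ : Equiv.Perm (Fin (n - m))) : Equiv.Perm (Fin (n + 1)) :=
  Equiv.ofBijective _ ((Finite.injective_iff_bijective).mp (combFun_injective hm σ τ))

lemma comb_apply {n m : ℕ} (hm : m ≤ n) (σ : Equiv.Perm (Fin m))
    (τ : Equiv.Perm (Fin (n - m))) (i : Fin (n + 1)) :
    comb hm σ τ i = combFun hm σ τ i := rfl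

lemma comb_avoids {n m : ℕ} (hm : m ≤ n) {σ : Equiv.Perm (Fin m)}
    {τ : Equiv.Perm (Fin (n - m))} (hσ : Avoids132P σ) (hτ : Avoids132P τ) :
    Avoids132P (comb hm σ τ) := by
  rintro ⟨i, j, k, hij, hjk, h1, h2⟩
  rw [Fin.lt_def] at hij hjk h1 h2
  simp only [comb_apply] at h1 h2
  rcases lt_trichotomy j.1 m with hj | hj | hj
  · have hi : i.1 < m := lt_trans hij hj
    rcases lt_trichotomy k.1 m with hk | hk | hk
    · refine hσ ⟨⟨i.1, hi⟩, ⟨j.1, hj⟩, ⟨k.1, hk⟩, ?_, ?_, ?_, ?_⟩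
      · exact hij
      · exact hjk
      · rw [Fin.lt_def]
        rw [combFun_val_lt hm σ τ ⟨i.1, hi⟩ i rfl, combFun_val_lt hm σ τ ⟨k.1, hk⟩ k rfl] at h1
        omega
      · rw [Fin.lt_def]
        rw [combFun_val_lt hm σ τ ⟨j.1, hj⟩ j rfl, combFun_val_lt hm σ τ ⟨k.1, hk⟩ k rfl] at h2
        omega
    · have := combFun_lb hm σ τ hj
      rw [combFun_val_eq hm σ τ k hk] at h2
      omega
    · have := combFun_lb hm σ τ hi
      have := combFun_ub hm σ τ hk
      omega
  · have hi : i.1 < m := hj ▸ hij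
    have hk : m < k.1 := hj ▸ hjk
    have := combFun_lb hm σ τ hi
    have := combFun_ub hm σ τ hk
    omega
  · have hk : m < k.1 := lt_trans hj hjk
    rcases lt_trichotomy i.1 m with hi | hi | hi
    · have := combFun_lb hm σ τ hi
      have := combFun_ub hm σ τ hk
      omega
    · have := combFun_ub hm σ τ hk
      rw [combFun_val_eq hm σ τ i hi] at h1
      omega
    · have hi' : i.1 - (m + 1) < n - m := by have := i.isLt; omega
      have hj' : j.1 - (m + 1) < n - m := by have := j.isLt; omega
      have hk' : k.1 - (m + 1) < n - m := by have := k.isLt; omega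
      refine hτ ⟨⟨i.1 - (m + 1), hi'⟩, ⟨j.1 - (m + 1), hj'⟩, ⟨k.1 - (m + 1), hk'⟩, ?_, ?_, ?_, ?_⟩
      · show i.1 - (m + 1) < j.1 - (m + 1); omega
      · show j.1 - (m + 1) < k.1 - (m + 1); omega
      · rw [Fin.lt_def]
        rw [combFun_val_gt hm σ τ ⟨i.1 - (m + 1), hi'⟩ i
            (show i.1 = m + 1 + (i.1 - (m + 1)) by omega),
          combFun_val_gt hm σ τ ⟨k.1 - (m + 1), hk'⟩ k
            (show k.1 = m + 1 + (k.1 - (m + 1)) by omega)] at h1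
        exact h1
      · rw [Fin.lt_def]
        rw [combFun_val_gt hm σ τ ⟨j.1 - (m + 1), hj'⟩ j
            (show j.1 = m + 1 + (j.1 - (m + 1)) by omega),
          combFun_val_gt hm σ τ ⟨k.1 - (m + 1), hk'⟩ k
            (show k.1 = m + 1 + (k.1 - (m + 1)) by omega)] at h2
        exact h2

lemma struct {n : ℕ} (π : Equiv.Perm (Fin (n + 1))) (hπ : Avoids132P π) {m : ℕ} (hmn : m ≤ n)
    (hm : (π ⟨m, by omega⟩).1 = n) :
    (∀ i : Fin (n + 1), i.1 < m → n - m ≤ (π i).1) ∧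
      (∀ k : Fin (n + 1), m < k.1 → (π k).1 < n - m) := by
  have step1 : ∀ i k : Fin (n + 1), i.1 < m → m < k.1 → (π k).1 < (π i).1 := by
    intro i k hi hk
    by_contra h
    push_neg at h
    have hne : π i ≠ π k := fun e => by
      have := π.injective e
      have := congrArg Fin.val this
      omega
    have h1 : (π i).1 < (π k).1 := lt_of_le_of_ne h (fun e => hne (Fin.ext e))
    have hkm : k ≠ (⟨m, by omega⟩ : Fin (n + 1)) := fun e => by
      have := congrArg Fin.val e; simp at this; omega
    have h2 : (π k).1 < n := by
      have : π k ≠ π ⟨m, by omega⟩ := fun e => hkm (π.injective e)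
      have hne2 : (π k).1 ≠ n := fun e => this (Fin.ext (by rw [hm, e]))
      have := (π k).isLt
      omega
    exact hπ ⟨i, ⟨m, by omega⟩, k, by rw [Fin.lt_def]; exact hi, by rw [Fin.lt_def]; exact hk,
      by rw [Fin.lt_def]; exact h1, by rw [Fin.lt_def]; omega⟩
  constructor
  · intro i hi
    have hsub : Finset.image π (Finset.Ioi (⟨m, by omega⟩ : Fin (n + 1)))
        ⊆ Finset.Iio (π i) := by
      intro v hv
      simp only [Finset.mem_image, Finset.mem_Ioi] at hv
      obtain ⟨k, hk, rfl⟩ := hv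
      rw [Finset.mem_Iio]
      rw [Fin.lt_def] at hk ⊢
      exact step1 i k hi hk
    have hcard := Finset.card_le_card hsub
    rw [Finset.card_image_of_injective _ π.injective, Fin.card_Ioi, Fin.card_Iio] at hcard
    simp only [Fin.val_mk] at hcard
    omega
  · intro k hk
    have hsub : Finset.image π (Finset.Iic (⟨m, by omega⟩ : Fin (n + 1)))
        ⊆ Finset.Ioi (π k) := by
      intro v hv
      simp only [Finset.mem_image, Finset.mem_Iic] at hv
      obtain ⟨i, hi, rfl⟩ := hv
      rw [Finset.mem_Ioi, Fin.lt_def]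
      rw [Fin.le_def] at hi
      simp only at hi
      rcases lt_or_eq_of_le hi with hi | hi
      · exact step1 i k hi hk
      · have : i = (⟨m, by omega⟩ : Fin (n + 1)) := Fin.ext hi
        rw [this, hm]
        have hkm : k ≠ (⟨m, by omega⟩ : Fin (n + 1)) := fun e => by
          have := congrArg Fin.val e; simp at this; omega
        have : π k ≠ π ⟨m, by omega⟩ := fun e => hkm (π.injective e)
        have hne2 : (π k).1 ≠ n := fun e => this (Fin.ext (by rw [hm, e]))
        have := (π k).isLt
        omega
    have hcard := Finset.card_le_card hsub
    rw [Finset.card_image_of_injective _ π.injective, Fin.card_Iic, Fin.card_Ioi] at hcard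
    simp only [Fin.val_mk] at hcard
    have := (π k).isLt
    omega

def T (n : ℕ) : Type :=
  Σ m : Fin (n + 1), {σ : Equiv.Perm (Fin m.1) // Avoids132P σ} ×
    {τ : Equiv.Perm (Fin (n - m.1)) // Avoids132P τ}

noncomputable def F (n : ℕ) : T n → {π : Equiv.Perm (Fin (n + 1)) // Avoids132P π} :=
  fun x => ⟨comb (Nat.lt_succ_iff.mp x.1.isLt) x.2.1.1 x.2.2.1,
    comb_avoids _ x.2.1.2 x.2.2.2⟩

lemma F_injective (n : ℕ) : Function.Injective (F n) := by
  rintro ⟨m, ⟨σ, hσ⟩, ⟨τ, hτ⟩⟩ ⟨m', ⟨σ', hσ'⟩, ⟨τ', hτ'⟩⟩ h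
  have h' : comb (Nat.lt_succ_iff.mp m.isLt) σ τ = comb (Nat.lt_succ_iff.mp m'.isLt) σ' τ' :=
    congrArg Subtype.val h
  have e1 : ∀ i : Fin (n + 1), (combFun (Nat.lt_succ_iff.mp m.isLt) σ τ i).1 =
      (combFun (Nat.lt_succ_iff.mp m'.isLt) σ' τ' i).1 := by
    intro i
    have := congrArg (fun (e : Equiv.Perm (Fin (n + 1))) => (e i).1) h'
    simpa [comb_apply] using this
  have hmm : m.1 = m'.1 := by
    by_contra hne
    rcases Nat.lt_or_ge m.1 m'.1 with hlt | hge
    · have := e1 ⟨m.1, m.isLt⟩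
      rw [combFun_val_eq _ σ τ _ rfl,
        combFun_val_lt _ σ' τ' ⟨m.1, hlt⟩ ⟨m.1, m.isLt⟩ rfl] at this
      have := (σ' ⟨m.1, hlt⟩).isLt
      omega
    · have hlt : m'.1 < m.1 := by omega
      have := e1 ⟨m'.1, m'.isLt⟩
      rw [combFun_val_eq _ σ' τ' _ rfl,
        combFun_val_lt _ σ τ ⟨m'.1, hlt⟩ ⟨m'.1, m'.isLt⟩ rfl] at this
      have := (σ ⟨m'.1, hlt⟩).isLt
      omega
  obtain rfl : m = m' := Fin.ext hmm
  have hσσ : σ = σ' := by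
    ext i
    have hi : (i.1 : ℕ) < m.1 := i.isLt
    have := e1 ⟨i.1, by omega⟩
    rw [combFun_val_lt _ σ τ i ⟨i.1, by omega⟩ rfl,
      combFun_val_lt _ σ' τ' i ⟨i.1, by omega⟩ rfl] at this
    omega
  have hττ : τ = τ' := by
    ext j
    have hj : (j.1 : ℕ) < n - m.1 := j.isLt
    have := e1 ⟨m.1 + 1 + j.1, by omega⟩
    rw [combFun_val_gt _ σ τ j ⟨m.1 + 1 + j.1, by omega⟩ rfl,
      combFun_val_gt _ σ' τ' j ⟨m.1 + 1 + j.1, by omega⟩ rfl] at this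
    omega
  subst hσσ; subst hττ
  rfl

set_option maxHeartbeats 2000000 in
lemma F_surjective (n : ℕ) : Function.Surjective (F n) := by
  rintro ⟨π, hπ⟩
  obtain ⟨mp, hπm⟩ : ∃ mp : Fin (n + 1), π mp = ⟨n, Nat.lt_succ_self n⟩ :=
    ⟨π.symm ⟨n, Nat.lt_succ_self n⟩, Equiv.apply_symm_apply _ _⟩
  have hmn : mp.1 ≤ n := Nat.lt_succ_iff.mp mp.isLt
  have hmval : (π ⟨mp.1, by omega⟩).1 = n := by
    rw [show (⟨mp.1, by omega⟩ : Fin (n + 1)) = mp from Fin.ext rfl, hπm]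
  obtain ⟨hL, hR⟩ := struct π hπ hmn hmval
  have hvne : ∀ i : Fin (n + 1), i.1 < mp.1 → (π i).1 ≠ n := by
    intro i hi e
    have h2 : π i = π mp := by rw [hπm]; exact Fin.ext e
    have := congrArg Fin.val (π.injective h2)
    omega
  -- the left permutation
  have gbound : ∀ i : Fin mp.1, (π ⟨i.1, by omega⟩).1 - (n - mp.1) < mp.1 := by
    intro i
    have h1 := hL ⟨i.1, by omega⟩ i.isLt
    have h2 := hvne ⟨i.1, by omega⟩ i.isLt
    have h3 := (π ⟨i.1, by omega⟩).isLt
    have := i.isLt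
    omega
  obtain ⟨σ, hσapp⟩ : ∃ σ : Equiv.Perm (Fin mp.1),
      ∀ i : Fin mp.1, (σ i).1 = (π ⟨i.1, by omega⟩).1 - (n - mp.1) := by
    have ginj : Function.Injective
        (fun i : Fin mp.1 => (⟨(π ⟨i.1, by omega⟩).1 - (n - mp.1), gbound i⟩ : Fin mp.1)) := by
      intro a b hab
      have hab0 := congrArg Fin.val hab
      have hab' : (π ⟨a.1, by omega⟩).1 - (n - mp.1) = (π ⟨b.1, by omega⟩).1 - (n - mp.1) :=
        hab0
      have h1 := hL ⟨a.1, by omega⟩ a.isLt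
      have h2 := hL ⟨b.1, by omega⟩ b.isLt
      have h3 : π ⟨a.1, by omega⟩ = π ⟨b.1, by omega⟩ := Fin.ext (by omega)
      have h4 := congrArg Fin.val (π.injective h3)
      have h5 : a.1 = b.1 := h4
      exact Fin.ext h5
    exact ⟨Equiv.ofBijective _ ((Finite.injective_iff_bijective).mp ginj), fun i => rfl⟩
  have hσA : Avoids132P σ := by
    rintro ⟨a, b, c, hab, hbc, h1, h2⟩
    rw [Fin.lt_def] at hab hbc h1 h2
    rw [hσapp, hσapp] at h1 h2
    have hLa := hL ⟨a.1, by omega⟩ a.isLt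
    have hLb := hL ⟨b.1, by omega⟩ b.isLt
    have hLc := hL ⟨c.1, by omega⟩ c.isLt
    exact hπ ⟨⟨a.1, by omega⟩, ⟨b.1, by omega⟩, ⟨c.1, by omega⟩,
      Fin.mk_lt_mk.mpr hab, Fin.mk_lt_mk.mpr hbc,
      by rw [Fin.lt_def]; omega, by rw [Fin.lt_def]; omega⟩
  -- the right permutation
  have tbound : ∀ j : Fin (n - mp.1), (π ⟨mp.1 + 1 + j.1, by have := j.isLt; omega⟩).1
      < n - mp.1 := by
    intro j
    exact hR ⟨mp.1 + 1 + j.1, by have := j.isLt; omega⟩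
      (show mp.1 < mp.1 + 1 + j.1 by omega)
  obtain ⟨τ, hτapp⟩ : ∃ τ : Equiv.Perm (Fin (n - mp.1)),
      ∀ j : Fin (n - mp.1), (τ j).1 = (π ⟨mp.1 + 1 + j.1, by have := j.isLt; omega⟩).1 := by
    have tinj : Function.Injective (fun j : Fin (n - mp.1) =>
        (⟨(π ⟨mp.1 + 1 + j.1, by have := j.isLt; omega⟩).1, tbound j⟩ : Fin (n - mp.1))) := by
      intro a b hab
      have hab0 := congrArg Fin.val hab
      have hab' : (π ⟨mp.1 + 1 + a.1, by have := a.isLt; omega⟩).1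
          = (π ⟨mp.1 + 1 + b.1, by have := b.isLt; omega⟩).1 := hab0
      have h3 : π ⟨mp.1 + 1 + a.1, by have := a.isLt; omega⟩
          = π ⟨mp.1 + 1 + b.1, by have := b.isLt; omega⟩ := Fin.ext hab'
      have h4 := congrArg Fin.val (π.injective h3)
      have h5 : mp.1 + 1 + a.1 = mp.1 + 1 + b.1 := h4
      exact Fin.ext (by omega)
    exact ⟨Equiv.ofBijective _ ((Finite.injective_iff_bijective).mp tinj), fun j => rfl⟩
  have hτA : Avoids132P τ := by
    rintro ⟨a, b, c, hab, hbc, h1, h2⟩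
    rw [Fin.lt_def] at hab hbc h1 h2
    rw [hτapp, hτapp] at h1 h2
    exact hπ ⟨⟨mp.1 + 1 + a.1, by have := a.isLt; omega⟩,
      ⟨mp.1 + 1 + b.1, by have := b.isLt; omega⟩,
      ⟨mp.1 + 1 + c.1, by have := c.isLt; omega⟩,
      Fin.mk_lt_mk.mpr (by omega), Fin.mk_lt_mk.mpr (by omega),
      by rw [Fin.lt_def]; exact h1, by rw [Fin.lt_def]; exact h2⟩
  refine ⟨⟨mp, ⟨σ, hσA⟩, ⟨τ, hτA⟩⟩, ?_⟩
  apply Subtype.ext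
  apply Equiv.ext
  intro i
  apply Fin.ext
  show (combFun hmn σ τ i).1 = (π i).1
  rcases lt_trichotomy i.1 mp.1 with hi | hi | hi
  · rw [combFun_val_lt hmn σ τ ⟨i.1, hi⟩ i rfl, hσapp]
    have heq : (⟨(⟨i.1, hi⟩ : Fin mp.1).1, by omega⟩ : Fin (n + 1)) = i := Fin.ext rfl
    rw [heq]
    have := hL i hi
    have := (π i).isLt
    omega
  · rw [combFun_val_eq hmn σ τ i hi]
    rw [show i = mp from Fin.ext hi, hπm]
  · have hj : i.1 - (mp.1 + 1) < n - mp.1 := by have := i.isLt; omega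
    rw [combFun_val_gt hmn σ τ ⟨i.1 - (mp.1 + 1), hj⟩ i
      (show i.1 = mp.1 + 1 + (i.1 - (mp.1 + 1)) by omega), hτapp]
    exact congrArg (fun x => (π x).1)
      (Fin.ext (show mp.1 + 1 + (i.1 - (mp.1 + 1)) = i.1 by omega))

lemma card_sigma' {k : ℕ} (f : Fin k → Type) [∀ i, Finite (f i)] :
    Nat.card (Σ i, f i) = ∑ i, Nat.card (f i) := by
  letI : ∀ i, Fintype (f i) := fun i => Fintype.ofFinite _
  simp [Nat.card_eq_fintype_card, Fintype.card_sigma]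

lemma A_succ (n : ℕ) : A (n + 1) = ∑ m : Fin (n + 1), A m.1 * A (n - m.1) := by
  have hb : Function.Bijective (F n) := ⟨F_injective n, F_surjective n⟩
  have hc := Nat.card_eq_of_bijective (F n) hb
  rw [A, ← hc]
  unfold T
  rw [card_sigma']
  refine Finset.sum_congr rfl fun m _ => ?_
  rw [Nat.card_prod]
  rfl

lemma A_zero : A 0 = 1 := by
  have : ∀ π : Equiv.Perm (Fin 0), Avoids132P π := by
    rintro π ⟨i, _, _, _⟩
    exact i.elim0
  rw [A, Nat.card_congr (Equiv.subtypeUnivEquiv this)]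
  simp [Nat.card_eq_fintype_card]

lemma A_eq_catalan (n : ℕ) : A n = catalan n := by
  induction n using Nat.strong_induction_on with
  | _ n ih =>
    match n with
    | 0 => rw [A_zero, catalan_zero]
    | k + 1 =>
      rw [A_succ, catalan_succ]
      exact Finset.sum_congr rfl fun i _ => by
        rw [ih i.1 (by omega), ih (k - i.1) (by have := i.isLt; omega)]

end Stmt14

/-- The number of 132-avoiding permutations of length `n` is
the `n`-th Catalan number. -/
theorem stmt14 (n : ℕ) :
    Nat.card {π : Equiv.Perm (Fin n) // Avoids132P π} = catalan n := by
  exact Stmt14.A_eq_catalan n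
end

section
/- For each k ≥ 1, the generating polynomial F_n^{(k)}(q) = sum over 132-avoiding permutations π of length n of q^{(number of increasing patterns of length k in π)} satisfies F_n^{(k)}(q) = sum over ordered trees T with n edges of q^{sum over nonroot vertices v of binomial(level(v)-1, k-1)}. -/
def chainB (k : ℕ) (u : List ℕ) : Bool := decide (u.length = k ∧ u.IsChain (· < ·))

def NN (w : List ℕ) (k : ℕ) : ℕ := w.sublists.countP (chainB k)

lemma mem_of_getLast? {u : List ℕ} {a : ℕ} (h : a ∈ u.getLast?) : a ∈ u := by
  obtain ⟨h', rfl⟩ := List.mem_getLast?_eq_getLast h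
  exact List.getLast_mem h'

lemma sum_map_ite_one (p : List ℕ → Bool) (L : List (List ℕ)) :
    (L.map (fun x => if p x then 1 else 0)).sum = L.countP p := by
  induction L with
  | nil => simp
  | cons a L ih => by_cases h : p a <;> simp [List.countP_cons, h, ih] <;> omega

lemma sum_map_ite_nil (C : ℕ) (L : List (List ℕ)) :
    (L.map (fun x => if x = [] then C else 0)).sum
      = C * L.countP (fun x => decide (x = [])) := by
  induction L with
  | nil => simp
  | cons a L ih =>
    by_cases h : a = [] <;> simp [h, ih, List.countP_cons] <;> ring

lemma countP_nil_sublists (A : List ℕ) :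
    A.sublists.countP (fun u => decide (u = [])) = 1 := by
  induction A with
  | nil => simp
  | cons a A ih =>
    rw [List.sublists_cons]
    simp only [List.bind_eq_flatMap, List.countP_flatMap, Function.comp_def]
    have h : ∀ x : List ℕ, List.countP (fun u => decide (u = [])) [x, a :: x]
        = if (fun u : List ℕ => decide (u = [])) x then 1 else 0 := by
      intro x
      by_cases h : x = [] <;> simp [List.countP_cons, h]
    rw [List.map_congr_left (fun x _ => h x), sum_map_ite_one, ih]

lemma NN_split {A B : List ℕ} {M k : ℕ} (hk : 1 ≤ k)
    (hA : A.Nodup) (hB : B.Nodup)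
    (hAM : ∀ a ∈ A, a < M) (hBM : ∀ b ∈ B, b < M)
    (hBA : ∀ a ∈ A, ∀ b ∈ B, b < a) :
    NN (A ++ M :: B) k = NN A k + NN B k + NN A (k - 1) := by
  have key : ∀ x : List ℕ, x.Sublist B →
      (A.sublists.countP (fun u => chainB k (u ++ x)))
        + (A.sublists.countP (fun u => chainB k (u ++ M :: x)))
      = (if x = [] then NN A k + NN A (k-1) else 0)
          + (if chainB k x then 1 else 0) := by
    intro x hx
    rcases x with _ | ⟨y, x'⟩
    · have h1 : A.sublists.countP (fun u => chainB k (u ++ [])) = NN A k := by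
        simp [NN]
      have h2 : A.sublists.countP (fun u => chainB k (u ++ [M])) = NN A (k-1) := by
        rw [show NN A (k-1) = A.sublists.countP (chainB (k-1)) from rfl]
        apply List.countP_congr
        intro u hu
        have hsub : u.Sublist A := List.mem_sublists.1 hu
        simp only [chainB, decide_eq_true_eq]
        rw [List.isChain_append]
        constructor
        · rintro ⟨hlen, hc, -, -⟩
          simp only [List.length_append, List.length_cons, List.length_nil] at hlen
          exact ⟨by omega, hc⟩
        · rintro ⟨hlen, hc⟩
          refine ⟨by simp; omega, hc, by simp, ?_⟩
          intro z hz y hy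
          simp only [List.head?_cons, Option.mem_def, Option.some_inj] at hy
          subst hy
          exact hAM z (hsub.subset (mem_of_getLast? hz))
      have h3 : chainB k ([] : List ℕ) = false := by
        simp [chainB]; omega
      simp [h2, h3, NN]
    · have hyB : y ∈ B := hx.subset (by simp)
      have h2 : A.sublists.countP (fun u => chainB k (u ++ M :: y :: x')) = 0 := by
        rw [List.countP_eq_zero]
        intro u hu
        simp only [chainB, decide_eq_true_eq, not_and]
        intro hlen hc
        have hc2 := (List.isChain_append.mp hc).2.1
        have := (List.isChain_cons_cons.mp hc2).1
        exact absurd this (by have := hBM y hyB; omega)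
      have h1 : A.sublists.countP (fun u => chainB k (u ++ y :: x'))
          = if chainB k (y :: x') then 1 else 0 := by
        have hcongr : A.sublists.countP (fun u => chainB k (u ++ y :: x'))
            = A.sublists.countP (fun u => (decide (u = [])) && chainB k (y :: x')) := by
          apply List.countP_congr
          intro u hu
          have hsub : u.Sublist A := List.mem_sublists.1 hu
          rcases u with _ | ⟨a, u''⟩
          · simp
          · simp only [Bool.and_eq_true, decide_eq_true_eq, chainB]
            constructor
            · rintro ⟨hlen, hc⟩
              exfalso
              obtain ⟨hcu, hcx, hlast⟩ := List.isChain_append.mp hc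
              have hz : (a :: u'').getLast (by simp) ∈ (a :: u'').getLast? := by
                rw [List.getLast?_eq_getLast_of_ne_nil (by simp)]; rfl
              have h1 := hlast _ hz y (by simp)
              have h2 := hBA _ (hsub.subset (mem_of_getLast? hz)) y hyB
              omega
            · rintro ⟨h, -⟩; simp at h
        rw [hcongr]
        by_cases hc : chainB k (y :: x')
        · simp [hc, countP_nil_sublists A]
        · simp [hc]
      simp [h1, h2]
  rw [NN, List.sublists_append, List.sublists_cons]
  simp only [List.bind_eq_flatMap, List.flatMap_assoc]
  rw [List.countP_flatMap]
  simp only [Function.comp_def, List.flatMap_cons, List.flatMap_nil, List.append_nil,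
    List.countP_append, List.countP_map]
  have congr1 : ∀ x ∈ B.sublists,
      (List.countP (fun u => chainB k (u ++ x)) A.sublists
        + List.countP (fun u => chainB k (u ++ M :: x)) A.sublists)
      = (fun x : List ℕ => (if x = [] then NN A k + NN A (k-1) else 0)
          + (if chainB k x then 1 else 0)) x := by
    intro x hxmem
    exact key x (List.mem_sublists.1 hxmem)
  rw [List.map_congr_left congr1]
  rw [List.sum_map_add, sum_map_ite_nil, sum_map_ite_one, countP_nil_sublists]
  rw [show B.sublists.countP (chainB k) = NN B k from rfl]
  ring


def Av (w : List ℕ) : Prop := ¬∃ x y z : ℕ, [x, y, z].Sublist w ∧ x < z ∧ z < y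

lemma Av.sublist {w w' : List ℕ} (h : Av w) (hs : w'.Sublist w) : Av w' := by
  rintro ⟨x, y, z, hsub, h1, h2⟩
  exact h ⟨x, y, z, hsub.trans hs, h1, h2⟩

lemma Av_nil : Av [] := by rintro ⟨x, y, z, hsub, -, -⟩; simp at hsub

lemma Av_append {A B : List ℕ} {M : ℕ} (hA : Av A) (hB : Av B)
    (hAM : ∀ a ∈ A, a < M) (hBM : ∀ b ∈ B, b < M)
    (hBA : ∀ a ∈ A, ∀ b ∈ B, b < a) :
    Av (A ++ M :: B) := by
  rintro ⟨x, y, z, hsub, hxz, hzy⟩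
  rw [List.sublist_append_iff] at hsub
  obtain ⟨p, q, hpq, hp, hq⟩ := hsub
  have hq' : q.Sublist B ∨ ∃ r, q = M :: r ∧ r.Sublist B := List.sublist_cons_iff.1 hq
  rcases p with _ | ⟨a, p⟩
  · simp only [List.nil_append] at hpq
    subst hpq
    rcases hq' with hqB | ⟨r, hr, hrB⟩
    · exact hB ⟨x, y, z, hqB, hxz, hzy⟩
    · have hxM : x = M := by injection hr
      have hr2 : r = [y, z] := by injection hr with h1 h2; exact h2.symm
      subst hxM; subst hr2
      have hzB : z ∈ B := hrB.subset (by simp)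
      exact absurd hxz (by have := hBM z hzB; omega)
  · rcases p with _ | ⟨b, p⟩
    · simp only [List.cons_append, List.nil_append, List.cons.injEq] at hpq
      obtain ⟨rfl, hq2⟩ := hpq
      subst hq2
      have hxA : x ∈ A := hp.subset (by simp)
      rcases hq' with hqB | ⟨r, hr, hrB⟩
      · have hzB : z ∈ B := hqB.subset (by simp)
        exact absurd hxz (by have := hBA x hxA z hzB; omega)
      · have hyM : y = M := by injection hr
        have hr2 : r = [z] := by injection hr with h1 h2; exact h2.symm
        subst hyM; subst hr2
        have hzB : z ∈ B := hrB.subset (by simp)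
        exact absurd hxz (by have := hBA x hxA z hzB; omega)
    · rcases p with _ | ⟨c, p⟩
      · simp only [List.cons_append, List.nil_append, List.cons.injEq] at hpq
        obtain ⟨rfl, rfl, hq2⟩ := hpq
        subst hq2
        have hyA : y ∈ A := hp.subset (by simp)
        have hxA : x ∈ A := hp.subset (by simp)
        rcases hq' with hqB | ⟨r, hr, hrB⟩
        · have hzB : z ∈ B := hqB.subset (by simp)
          exact absurd hxz (by have := hBA x hxA z hzB; omega)
        · have hzM : z = M := by injection hr
          subst hzM
          exact absurd hzy (by have := hAM y hyA; omega)
      · have hlq : p = [] ∧ q = [] := by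
          have hl := congrArg List.length hpq
          simp only [List.length_append, List.length_cons, List.length_nil] at hl
          refine ⟨List.length_eq_zero_iff.1 (by omega), List.length_eq_zero_iff.1 (by omega)⟩
        obtain ⟨rfl, rfl⟩ := hlq
        simp only [List.append_nil, List.cons.injEq, and_true] at hpq
        obtain ⟨rfl, rfl, rfl⟩ := hpq
        exact hA ⟨_, _, _, by simpa using hp, hxz, hzy⟩

namespace OTree

theorem wordP : ∀ (t : OTree) (c : ℕ),
    (wordFrom t c).Nodup ∧ (wordFrom t c).toFinset = Finset.Icc (c + 1) (c + edges t)
  | node [], c => by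
    simp only [wordFrom, edges]
    refine ⟨List.nodup_nil, ?_⟩
    rw [List.toFinset_nil, eq_comm, Finset.Icc_eq_empty]
    omega
  | node (t :: ts), c => by
    obtain ⟨n1, f1⟩ := wordP t (c + edges (node ts))
    obtain ⟨n2, f2⟩ := wordP (node ts) c
    have memA : ∀ x ∈ wordFrom t (c + edges (node ts)), c + edges (node ts) + 1 ≤ x ∧
        x ≤ c + edges (node ts) + edges t := by
      intro x hx
      have : x ∈ (wordFrom t (c + edges (node ts))).toFinset := List.mem_toFinset.2 hx
      rw [f1] at this
      exact Finset.mem_Icc.1 this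
    have memB : ∀ x ∈ wordFrom (node ts) c, c + 1 ≤ x ∧ x ≤ c + edges (node ts) := by
      intro x hx
      have : x ∈ (wordFrom (node ts) c).toFinset := List.mem_toFinset.2 hx
      rw [f2] at this
      exact Finset.mem_Icc.1 this
    constructor
    · rw [wordFrom, List.nodup_append]
      refine ⟨n1, ?_, ?_⟩
      · rw [List.nodup_cons]
        refine ⟨fun hmem => ?_, n2⟩
        have := memB _ hmem
        simp only [edges] at this
        omega
      · intro a ha b hb hab
        subst hab
        have h1 := memA a ha
        rcases List.mem_cons.1 hb with rfl | hb
        · simp only [edges] at h1; omega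
        · have := memB a hb; omega
    · rw [wordFrom]
      ext x
      simp only [List.toFinset_append, List.toFinset_cons, Finset.mem_union, Finset.mem_insert,
        f1, f2, Finset.mem_Icc, edges]
      omega

theorem length_wordFrom (t : OTree) (c : ℕ) : (wordFrom t c).length = edges t := by
  obtain ⟨n, f⟩ := wordP t c
  have := List.toFinset_card_of_nodup n
  rw [f, Nat.card_Icc] at this
  omega

theorem levels_card : ∀ t : OTree, Multiset.card (levels t) = edges t
  | node [] => by simp [levels, edges]
  | node (t :: ts) => by
    have h1 := levels_card t
    have h2 := levels_card (node ts)
    simp [levels, edges, h1, h2]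
    omega

theorem levels_pos : ∀ t : OTree, ∀ l ∈ levels t, 1 ≤ l
  | node [] => by simp [levels]
  | node (t :: ts) => by
    intro l hl
    simp only [levels, Multiset.mem_add, Multiset.mem_cons, Multiset.mem_map] at hl
    rcases hl with (rfl | ⟨a, _, rfl⟩) | hl
    · omega
    · omega
    · exact levels_pos (node ts) l hl

def EE (t : OTree) (k : ℕ) : ℕ := ((t.levels).map fun l => (l - 1).choose (k - 1)).sum

theorem EE_one (t : OTree) : EE t 1 = edges t := by
  rw [EE, Multiset.map_congr rfl (fun x _ => by simp : ∀ x ∈ t.levels, (x-1).choose 0 = 1)]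
  simp [levels_card]

theorem EE_rec (t : OTree) (ts : List OTree) (k : ℕ) (hk : 2 ≤ k) :
    EE (node (t :: ts)) k = EE t k + EE t (k - 1) + EE (node ts) k := by
  rw [EE, levels]
  simp only [Multiset.map_add, Multiset.map_cons, Multiset.sum_add, Multiset.sum_cons,
    Multiset.map_map]
  have h0 : (1 - 1).choose (k - 1) = 0 := by
    obtain ⟨m, rfl⟩ : ∃ m, k = m + 2 := ⟨k - 2, by omega⟩
    simp
  have hcongr : ∀ l ∈ levels t,
      ((fun l => (l - 1).choose (k - 1)) ∘ (· + 1)) l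
        = (l - 1).choose (k - 1) + (l - 1).choose (k - 1 - 1) := by
    intro l hl
    have h1 : 1 ≤ l := levels_pos t l hl
    obtain ⟨a, rfl⟩ : ∃ a, l = a + 1 := ⟨l - 1, by omega⟩
    obtain ⟨b, rfl⟩ : ∃ b, k = b + 2 := ⟨k - 2, by omega⟩
    simp only [Function.comp_apply, Nat.add_sub_cancel]
    rw [show b + 2 - 1 = b + 1 from rfl, show b + 1 - 1 = b from rfl,
      Nat.choose_succ_succ, Nat.succ_eq_add_one]
    omega
  rw [Multiset.map_congr rfl hcongr, h0, Multiset.sum_map_add]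
  rw [EE, EE, EE]
  omega


theorem Av_wordFrom : ∀ (t : OTree) (c : ℕ), Av (wordFrom t c)
  | node [], c => by rw [wordFrom]; exact Av_nil
  | node (t :: ts), c => by
    obtain ⟨n1, f1⟩ := wordP t (c + edges (node ts))
    obtain ⟨n2, f2⟩ := wordP (node ts) c
    have memA : ∀ x ∈ wordFrom t (c + edges (node ts)), c + edges (node ts) + 1 ≤ x ∧
        x ≤ c + edges (node ts) + edges t := by
      intro x hx
      have hh : x ∈ (wordFrom t (c + edges (node ts))).toFinset := List.mem_toFinset.2 hx
      rw [f1] at hh; exact Finset.mem_Icc.1 hh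
    have memB : ∀ x ∈ wordFrom (node ts) c, c + 1 ≤ x ∧ x ≤ c + edges (node ts) := by
      intro x hx
      have hh : x ∈ (wordFrom (node ts) c).toFinset := List.mem_toFinset.2 hx
      rw [f2] at hh; exact Finset.mem_Icc.1 hh
    have hM : edges (node (t :: ts)) = edges t + 1 + edges (node ts) := by rw [edges]
    rw [wordFrom]
    exact Av_append (Av_wordFrom t (c + edges (node ts))) (Av_wordFrom (node ts) c)
      (fun a ha => by have := memA a ha; omega)
      (fun b hb => by have := memB b hb; omega)
      (fun a ha b hb => by have h1 := memA a ha; have h2 := memB b hb; omega)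

theorem append_mid_inj : ∀ (X X' : List ℕ) {m : ℕ} {Y Y' : List ℕ},
    m ∉ X → m ∉ X' → X ++ m :: Y = X' ++ m :: Y' → X = X' ∧ Y = Y'
  | [], [], m, Y, Y', _, _, h => by simpa using h
  | [], x' :: X', m, Y, Y', _, h2, h => by
    exfalso
    simp only [List.nil_append, List.cons_append, List.cons.injEq] at h
    exact h2 (h.1 ▸ (List.mem_cons_self (a := x') (l := X')))
  | x :: X, [], m, Y, Y', h1, _, h => by
    exfalso
    simp only [List.nil_append, List.cons_append, List.cons.injEq] at h
    exact h1 (h.1.symm ▸ (List.mem_cons_self (a := x) (l := X)))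
  | x :: X, x' :: X', m, Y, Y', h1, h2, h => by
    simp only [List.cons_append, List.cons.injEq] at h
    obtain ⟨rfl, h⟩ := h
    obtain ⟨hX, hY⟩ := append_mid_inj X X' (fun hm => h1 (List.mem_cons_of_mem _ hm))
      (fun hm => h2 (List.mem_cons_of_mem _ hm)) h
    exact ⟨by rw [hX], hY⟩

theorem word_inj : ∀ (t t' : OTree) (c : ℕ), wordFrom t c = wordFrom t' c → t = t'
  | node [], node [], _, _ => rfl
  | node [], node (t' :: ts'), c, h => by
    rw [wordFrom, wordFrom] at h
    exact absurd h.symm (by simp)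
  | node (t :: ts), node [], c, h => by
    rw [wordFrom, wordFrom] at h
    exact absurd h (by simp)
  | node (t :: ts), node (t' :: ts'), c, h => by
    rw [wordFrom, wordFrom] at h
    have hlen := congrArg List.length h
    simp only [List.length_append, List.length_cons, length_wordFrom] at hlen
    have hE : edges (node (t :: ts)) = edges (node (t' :: ts')) := by
      rw [edges, edges]; omega
    rw [← hE] at h
    have notinA : c + edges (node (t :: ts)) ∉ wordFrom t (c + edges (node ts)) := by
      intro hm
      have := (wordP t (c + edges (node ts))).2
      have hmm := List.mem_toFinset.2 hm
      rw [this] at hmm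
      have h5 := Finset.mem_Icc.1 hmm
      have h4 : edges (node (t :: ts)) = edges t + 1 + edges (node ts) := by rw [edges]
      omega
    have notinA' : c + edges (node (t :: ts)) ∉ wordFrom t' (c + edges (node ts')) := by
      intro hm
      have h2 := (wordP t' (c + edges (node ts'))).2
      have hmm := List.mem_toFinset.2 hm
      rw [h2] at hmm
      have h3 := Finset.mem_Icc.1 hmm
      rw [hE] at h3
      have h4 : edges (node (t' :: ts')) = edges t' + 1 + edges (node ts') := by rw [edges]
      omega
    obtain ⟨hA, hB⟩ := append_mid_inj _ _ notinA notinA' h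
    have hts : node ts = node ts' := word_inj (node ts) (node ts') c hB
    have hts' : ts = ts' := by injection hts
    subst hts'
    have ht : t = t' := word_inj t t' (c + edges (node ts)) hA
    rw [ht]

theorem exists_tree (m : ℕ) : ∀ (c : ℕ) (w : List ℕ), Av w → w.Nodup →
    w.toFinset = Finset.Icc (c + 1) (c + m) → ∃ t : OTree, edges t = m ∧ wordFrom t c = w := by
  induction m using Nat.strong_induction_on with
  | _ m ih =>
    intro c w hav hnd hfin
    rcases Nat.eq_zero_or_pos m with rfl | hm
    · have h0 : w.toFinset = ∅ := by rw [hfin]; exact Finset.Icc_eq_empty (by omega)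
      have hw : w = [] := (List.toFinset_eq_empty_iff _).1 h0
      exact ⟨node [], by rw [OTree.edges], by rw [OTree.wordFrom, hw]⟩
    · have hmemw : c + m ∈ w := by
        rw [← List.mem_toFinset, hfin]; exact Finset.mem_Icc.2 (by omega)
      obtain ⟨A, B, rfl⟩ := List.mem_iff_append.1 hmemw
      obtain ⟨hndA, hndMB, hdisj⟩ := List.nodup_append.1 hnd
      obtain ⟨hMB, hndB⟩ := List.nodup_cons.1 hndMB
      have hMA : c + m ∉ A := fun h => hdisj _ h _ List.mem_cons_self rfl
      have hboundsw : ∀ x ∈ A ++ (c + m) :: B, c + 1 ≤ x ∧ x ≤ c + m := by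
        intro x hx
        have := List.mem_toFinset.2 hx
        rw [hfin] at this
        exact Finset.mem_Icc.1 this
      have hlenw : (A ++ (c + m) :: B).length = m := by
        have := List.toFinset_card_of_nodup hnd
        rw [hfin, Nat.card_Icc] at this
        omega
      set nA := A.length with hnA
      set nB := B.length with hnB
      have hmAB : nA + 1 + nB = m := by
        rw [List.length_append, List.length_cons] at hlenw
        omega
      have hBA : ∀ a ∈ A, ∀ b ∈ B, b < a := by
        intro a ha b hb
        have hbw := hboundsw b (by simp [hb])
        have hbne : b ≠ c + m := fun h => hMB (h ▸ hb)
        have hane : a ≠ b := fun h => hdisj _ ha _ (List.mem_cons_of_mem _ hb) h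
        by_contra hab
        refine hav ⟨a, c + m, b, ?_, by omega, by omega⟩
        exact List.Sublist.append (List.singleton_sublist.2 ha)
          ((List.singleton_sublist.2 hb).cons₂ _)
      have hBsub : B.toFinset ⊆ Finset.Icc (c + 1) (c + nB) := by
        intro b hb
        have hbB : b ∈ B := List.mem_toFinset.1 hb
        have hbbounds := hboundsw b (by simp [hbB])
        have hsub2 : A.toFinset ∪ {c + m} ⊆ Finset.Ioc b (c + m) := by
          intro a' ha'
          rcases Finset.mem_union.1 ha' with ha' | ha'
          · have haA := List.mem_toFinset.1 ha'
            have h1 := hBA a' haA b hbB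
            have h2 := hboundsw a' (by simp [haA])
            exact Finset.mem_Ioc.2 ⟨h1, h2.2⟩
          · rw [Finset.mem_singleton.1 ha']
            have hbne : b ≠ c + m := fun h => hMB (h ▸ hbB)
            exact Finset.mem_Ioc.2 ⟨by omega, le_rfl⟩
        have h1 := Finset.card_le_card hsub2
        rw [Finset.card_union_of_disjoint (by simp [hMA]),
          List.toFinset_card_of_nodup hndA, Nat.card_Ioc] at h1
        simp only [Finset.card_singleton] at h1
        exact Finset.mem_Icc.2 ⟨hbbounds.1, by omega⟩
      have hBfin : B.toFinset = Finset.Icc (c + 1) (c + nB) := by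
        apply Finset.eq_of_subset_of_card_le hBsub
        rw [Nat.card_Icc, List.toFinset_card_of_nodup hndB]
        omega
      have hAfin : A.toFinset = Finset.Icc (c + nB + 1) (c + nB + nA) := by
        ext a
        simp only [List.mem_toFinset, Finset.mem_Icc]
        constructor
        · intro haA
          have hab := hboundsw a (by simp [haA])
          have hane : a ≠ c + m := fun h => hMA (h ▸ haA)
          have hlow : c + nB < a := by
            rcases Nat.eq_zero_or_pos nB with h0 | h0
            · omega
            · have hcB : c + nB ∈ B := by
                rw [← List.mem_toFinset, hBfin]
                exact Finset.mem_Icc.2 (by omega)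
              exact hBA a haA _ hcB
          exact ⟨by omega, by omega⟩
        · rintro ⟨h1, h2⟩
          have haw : a ∈ A ++ (c + m) :: B := by
            rw [← List.mem_toFinset, hfin]
            exact Finset.mem_Icc.2 ⟨by omega, by omega⟩
          rcases List.mem_append.1 haw with h | h
          · exact h
          · rcases List.mem_cons.1 h with h | h
            · omega
            · have hb := List.mem_toFinset.2 h
              rw [hBfin] at hb
              have := Finset.mem_Icc.1 hb
              omega
      have hAvA : Av A := hav.sublist (List.sublist_append_left _ _)
      have hAvB : Av B :=
        hav.sublist ((List.sublist_cons_self _ _).trans (List.sublist_append_right _ _))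
      obtain ⟨tB, htBe, htBw⟩ := ih nB (by omega) c B hAvB hndB hBfin
      obtain ⟨tA, htAe, htAw⟩ := ih nA (by omega) (c + nB) A hAvA hndA (by rw [hAfin])
      rcases tB with ⟨ts⟩
      have hedges : edges (node (tA :: ts)) = m := by
        rw [OTree.edges, htAe, htBe]; omega
      refine ⟨node (tA :: ts), hedges, ?_⟩
      rw [OTree.wordFrom, hedges, htBe, htAw, htBw]

theorem NN_zero (w : List ℕ) : NN w 0 = 1 := by
  have h : ∀ u ∈ w.sublists, chainB 0 u = true ↔ decide (u = []) = true := by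
    intro u _
    simp only [chainB, decide_eq_true_eq]
    constructor
    · rintro ⟨h, -⟩; exact List.length_eq_zero_iff.1 h
    · rintro rfl; simp
  rw [NN, List.countP_congr h, countP_nil_sublists]

theorem NN_word : ∀ (t : OTree) (c k : ℕ), 1 ≤ k → NN (wordFrom t c) k = EE t k
  | node [], c, k, hk => by
    simp only [wordFrom]
    have h0 : NN [] k = 0 := by
      have : ([] : List ℕ).sublists = [[]] := rfl
      rw [NN, this]
      simp only [List.countP_cons, List.countP_nil, chainB]
      have : ¬ (([] : List ℕ).length = k ∧ List.IsChain (· < ·) ([] : List ℕ)) := by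
        simp; omega
      simp [this]
      omega
    rw [h0, EE, levels]
    simp
  | node (t :: ts), c, k, hk => by
    obtain ⟨n1, f1⟩ := wordP t (c + edges (node ts))
    obtain ⟨n2, f2⟩ := wordP (node ts) c
    have memA : ∀ x ∈ wordFrom t (c + edges (node ts)), c + edges (node ts) + 1 ≤ x ∧
        x ≤ c + edges (node ts) + edges t := by
      intro x hx
      have hh : x ∈ (wordFrom t (c + edges (node ts))).toFinset := List.mem_toFinset.2 hx
      rw [f1] at hh
      exact Finset.mem_Icc.1 hh
    have memB : ∀ x ∈ wordFrom (node ts) c, c + 1 ≤ x ∧ x ≤ c + edges (node ts) := by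
      intro x hx
      have hh : x ∈ (wordFrom (node ts) c).toFinset := List.mem_toFinset.2 hx
      rw [f2] at hh
      exact Finset.mem_Icc.1 hh
    have hM : edges (node (t :: ts)) = edges t + 1 + edges (node ts) := by rw [edges]
    rw [wordFrom, NN_split hk n1 n2
      (fun a ha => by have := memA a ha; omega)
      (fun b hb => by have := memB b hb; omega)
      (fun a ha b hb => by have h1 := memA a ha; have h2 := memB b hb; omega)]
    rcases Nat.lt_or_ge k 2 with hk2 | hk2
    · have hk1 : k = 1 := by omega
      subst hk1
      rw [NN_word t (c + edges (node ts)) 1 le_rfl, NN_word (node ts) c 1 le_rfl]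
      simp only [Nat.sub_self, NN_zero]
      rw [EE_one, EE_one, EE_one, hM]
      omega
    · rw [NN_word t (c + edges (node ts)) k hk, NN_word (node ts) c k hk,
        NN_word t (c + edges (node ts)) (k - 1) (by omega), EE_rec t ts k hk2]
      omega

end OTree


lemma sublist_iff_map_get {w u : List ℕ} :
    u.Sublist w ↔ ∃ is : List (Fin w.length), is.Pairwise (· < ·) ∧ u = is.map w.get := by
  rw [List.sublist_iff_exists_fin_orderEmbedding_get_eq]
  constructor
  · rintro ⟨f, hf⟩
    refine ⟨(List.finRange u.length).map f, ?_, ?_⟩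
    · exact (List.pairwise_lt_finRange _).map _ (fun a b h => f.strictMono h)
    · apply List.ext_get (by simp)
      intro n h1 h2
      simp only [List.getElem_map, List.get_eq_getElem] at *
      simpa using hf ⟨n, h1⟩
  · rintro ⟨is, hp, rfl⟩
    have hlen : (is.map w.get).length = is.length := by simp
    refine ⟨OrderEmbedding.ofStrictMono (fun x => is.get (Fin.cast hlen x)) ?_, ?_⟩
    · intro a b hab
      exact List.pairwise_iff_get.1 hp (Fin.cast hlen a) (Fin.cast hlen b) (by simpa using hab)
    · intro i
      simp [OrderEmbedding.ofStrictMono]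

section PermOf

variable {n : ℕ} {w : List ℕ}

noncomputable def permOf (n : ℕ) (w : List ℕ) (hw : w.Nodup) (hlen : w.length = n)
    (hmem : ∀ x ∈ w, 1 ≤ x ∧ x ≤ n) : Equiv.Perm (Fin n) :=
  Equiv.ofBijective
    (fun i => ⟨w.getD i 0 - 1, by
      have hi : (i : ℕ) < w.length := hlen.symm ▸ i.2
      rw [List.getD_eq_getElem _ _ hi]
      have := hmem _ (List.getElem_mem hi)
      omega⟩)
    (by
      rw [Fintype.bijective_iff_injective_and_card]
      refine ⟨?_, rfl⟩
      intro i j hij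
      have hi : (i : ℕ) < w.length := hlen.symm ▸ i.2
      have hj : (j : ℕ) < w.length := hlen.symm ▸ j.2
      have h1 : w.getD i 0 - 1 = w.getD j 0 - 1 := congrArg Fin.val hij
      rw [List.getD_eq_getElem _ _ hi, List.getD_eq_getElem _ _ hj] at h1
      have hbi := hmem _ (List.getElem_mem hi)
      have hbj := hmem _ (List.getElem_mem hj)
      have h2 : w[(i : ℕ)] = w[(j : ℕ)] := by omega
      have h3 := List.nodup_iff_injective_get.1 hw
        (a₁ := ⟨i, hi⟩) (a₂ := ⟨j, hj⟩) (by simpa using h2)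
      exact Fin.ext (by simpa using congrArg Fin.val h3))

lemma permOf_val (hw : w.Nodup) (hlen : w.length = n)
    (hmem : ∀ x ∈ w, 1 ≤ x ∧ x ≤ n) (i : Fin n) :
    ((permOf n w hw hlen hmem i : Fin n) : ℕ)
      = w.get ⟨i, hlen.symm ▸ i.2⟩ - 1 := by
  have hi : (i : ℕ) < w.length := hlen.symm ▸ i.2
  show w.getD i 0 - 1 = _
  rw [List.getD_eq_getElem _ _ hi]
  simp

lemma get_bounds (hlen : w.length = n) (hmem : ∀ x ∈ w, 1 ≤ x ∧ x ≤ n)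
    (i : Fin w.length) : 1 ≤ w.get i ∧ w.get i ≤ n := by
  apply hmem
  simp only [List.get_eq_getElem]
  exact List.getElem_mem _

lemma avoids_of_av (hw : w.Nodup) (hlen : w.length = n)
    (hmem : ∀ x ∈ w, 1 ≤ x ∧ x ≤ n) (hav : Av w) :
    Avoids132P (permOf n w hw hlen hmem) := by
  rintro ⟨i, j, k, hij, hjk, h1, h2⟩
  set π := permOf n w hw hlen hmem
  have hi : (i : ℕ) < w.length := hlen.symm ▸ i.2
  have hj : (j : ℕ) < w.length := hlen.symm ▸ j.2
  have hk : (k : ℕ) < w.length := hlen.symm ▸ k.2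
  have hbi := get_bounds hlen hmem ⟨i, hi⟩
  have hbj := get_bounds hlen hmem ⟨j, hj⟩
  have hbk := get_bounds hlen hmem ⟨k, hk⟩
  have hv1 : (π i : ℕ) = w.get ⟨i, hi⟩ - 1 := permOf_val hw hlen hmem i
  have hv2 : (π j : ℕ) = w.get ⟨j, hj⟩ - 1 := permOf_val hw hlen hmem j
  have hv3 : (π k : ℕ) = w.get ⟨k, hk⟩ - 1 := permOf_val hw hlen hmem k
  have hsub : [w.get ⟨i, hi⟩, w.get ⟨j, hj⟩, w.get ⟨k, hk⟩].Sublist w := by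
    rw [sublist_iff_map_get]
    refine ⟨[⟨i, hi⟩, ⟨j, hj⟩, ⟨k, hk⟩], ?_, by simp⟩
    simp only [List.pairwise_cons, List.mem_cons, List.mem_singleton]
    refine ⟨?_, ?_, by simp⟩
    · rintro a (rfl | rfl | h)
      · exact hij
      · exact hij.trans hjk
      · simp at h
    · rintro a (rfl | h)
      · exact hjk
      · simp at h
  have hlt1 : (π i : ℕ) < π k := h1
  have hlt2 : (π k : ℕ) < π j := h2
  exact hav ⟨_, _, _, hsub, by omega, by omega⟩

lemma av_ofFn {π : Equiv.Perm (Fin n)} (h : Avoids132P π) :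
    Av (List.ofFn fun i => (π i : ℕ) + 1) := by
  set w := List.ofFn fun i : Fin n => (π i : ℕ) + 1 with hwdef
  rintro ⟨x, y, z, hsub, h1, h2⟩
  rw [sublist_iff_map_get] at hsub
  obtain ⟨is, hp, heq⟩ := hsub
  have hlen3 : is.length = 3 := by
    have := congrArg List.length heq
    simpa using this.symm
  obtain ⟨a, b, cc, rfl⟩ : ∃ a b cc, is = [a, b, cc] := by
    rcases is with _ | ⟨a, is⟩; · simp at hlen3
    rcases is with _ | ⟨b, is⟩; · simp at hlen3
    rcases is with _ | ⟨cc, is⟩; · simp at hlen3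
    rcases is with _ | ⟨d, is⟩; · exact ⟨a, b, cc, rfl⟩
    · simp at hlen3
  simp only [List.map_cons, List.map_nil, List.cons.injEq, and_true] at heq
  obtain ⟨rfl, rfl, rfl⟩ := heq
  simp only [List.pairwise_cons, List.mem_cons, List.mem_singleton] at hp
  have hab : a < b := hp.1 b (Or.inl rfl)
  have hac : a < cc := hp.1 cc (Or.inr (Or.inl rfl))
  have hbc : b < cc := hp.2.1 cc (Or.inl rfl)
  have hwl : w.length = n := by simp [hwdef]
  have hget : ∀ i : Fin w.length, w.get i = (π (Fin.cast hwl i) : ℕ) + 1 := by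
    intro i
    simp [hwdef, List.get_ofFn]
    rfl
  simp only [hget] at h1 h2
  refine h ⟨Fin.cast hwl a, Fin.cast hwl b, Fin.cast hwl cc, ?_, ?_, ?_, ?_⟩
  · exact hab
  · exact hbc
  · show ((π (Fin.cast hwl a) : Fin n) : ℕ) < ((π (Fin.cast hwl cc) : Fin n) : ℕ)
    omega
  · show ((π (Fin.cast hwl cc) : Fin n) : ℕ) < ((π (Fin.cast hwl b) : Fin n) : ℕ)
    omega

end PermOf

theorem incCountP_permOf {n k : ℕ} {w : List ℕ} (hw : w.Nodup) (hlen : w.length = n)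
    (hmem : ∀ x ∈ w, 1 ≤ x ∧ x ≤ n) :
    incCountP (permOf n w hw hlen hmem) k = NN w k := by
  classical
  set π := permOf n w hw hlen hmem with hπ
  have hval : ∀ j : Fin n, 1 ≤ w.getD j 0 ∧ w.getD j 0 ≤ n ∧ (π j : ℕ) = w.getD j 0 - 1 := by
    intro j
    have hj : (j : ℕ) < w.length := hlen.symm ▸ j.2
    have h1 := hmem _ (List.getElem_mem hj)
    rw [List.getD_eq_getElem _ _ hj]
    refine ⟨h1.1, h1.2, ?_⟩
    have := permOf_val hw hlen hmem j
    rw [hπ, this]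
    simp [List.getD_eq_getElem _ _ hj]
  have hNN : NN w k = ((w.sublists.filter (chainB k)).toFinset).card := by
    rw [NN, List.countP_eq_length_filter]
    exact (List.toFinset_card_of_nodup ((List.nodup_sublists.2 hw).filter _)).symm
  rw [hNN]
  unfold incCountP
  apply Finset.card_bij (fun S _ => (Finset.sort S (· ≤ ·)).map (fun j : Fin n => w.getD j 0))
  · intro S hS
    obtain ⟨hcard, hmono⟩ := (Finset.mem_filter.1 hS).2
    set l := Finset.sort S (· ≤ ·) with hl
    have hsorted : l.Pairwise (· ≤ ·) := Finset.pairwise_sort _ _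
    have hnodupl : l.Nodup := Finset.sort_nodup _ _
    have hplt : l.Pairwise (· < ·) :=
      (List.Pairwise.and hsorted hnodupl).imp (fun h => lt_of_le_of_ne h.1 h.2)
    rw [List.mem_toFinset, List.mem_filter, List.mem_sublists]
    constructor
    · rw [sublist_iff_map_get]
      refine ⟨l.map (fun j => Fin.cast hlen.symm j), ?_, ?_⟩
      · rw [List.pairwise_map]
        exact hplt.imp (fun h => h)
      · rw [List.map_map]
        apply List.map_congr_left
        intro j hj
        have hjl : (j : ℕ) < w.length := hlen.symm ▸ j.2
        rw [List.getD_eq_getElem _ _ hjl]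
        simp
    · simp only [chainB, decide_eq_true_eq]
      constructor
      · rw [List.length_map]
        rw [hl, Finset.length_sort]
        exact hcard
      · rw [List.isChain_iff_pairwise, List.pairwise_map]
        apply hplt.imp_of_mem
        intro a b ha hb hab
        have haS : a ∈ S := (Finset.mem_sort _).1 ha
        have hbS : b ∈ S := (Finset.mem_sort _).1 hb
        have := hmono a haS b hbS hab
        have hva := hval a
        have hvb := hval b
        have : (π a : ℕ) < (π b : ℕ) := this
        omega
  · intro S1 h1 S2 h2 heq
    have hinj : Function.Injective (fun j : Fin n => w.getD j 0) := by
      intro a b hab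
      have hal : (a : ℕ) < w.length := hlen.symm ▸ a.2
      have hbl : (b : ℕ) < w.length := hlen.symm ▸ b.2
      simp only [List.getD_eq_getElem _ _ hal, List.getD_eq_getElem _ _ hbl] at hab
      have h3 := List.nodup_iff_injective_get.1 hw
        (a₁ := ⟨a, hal⟩) (a₂ := ⟨b, hbl⟩) (by simpa using hab)
      exact Fin.ext (by simpa using congrArg Fin.val h3)
    have hseq : Finset.sort S1 (· ≤ ·) = Finset.sort S2 (· ≤ ·) :=
      List.map_injective_iff.2 hinj heq
    rw [← Finset.sort_toFinset (s := S1) (r := (· ≤ ·)), hseq, Finset.sort_toFinset]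
  · intro u hu
    rw [List.mem_toFinset, List.mem_filter, List.mem_sublists] at hu
    obtain ⟨hsub, hchainB⟩ := hu
    simp only [chainB, decide_eq_true_eq] at hchainB
    obtain ⟨hlenu, hch⟩ := hchainB
    rw [sublist_iff_map_get] at hsub
    obtain ⟨is, hp, rfl⟩ := hsub
    have hisnd : is.Nodup := hp.imp ne_of_lt
    have hcastinj : Function.Injective (Fin.cast hlen) := fun a b h => Fin.ext (by
      simpa using congrArg Fin.val h)
    have hmnd : (is.map (Fin.cast hlen)).Nodup := hisnd.map hcastinj
    have hpm : (is.map (Fin.cast hlen)).Pairwise (· < ·) := by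
      rw [List.pairwise_map]
      exact hp.imp (fun h => h)
    have hpv : is.Pairwise (fun a b => w.get a < w.get b) :=
      List.pairwise_map.1 (List.isChain_iff_pairwise.1 hch)
    refine ⟨(is.map (Fin.cast hlen)).toFinset, ?_, ?_⟩
    · rw [Finset.mem_filter]
      refine ⟨Finset.mem_univ _, ?_, ?_⟩
      · rw [List.toFinset_card_of_nodup hmnd, List.length_map]
        rw [List.length_map] at hlenu
        exact hlenu
      · intro i hi j hj hij
        rw [List.mem_toFinset, List.mem_map] at hi hj
        obtain ⟨a, ha, rfl⟩ := hi
        obtain ⟨b, hb, rfl⟩ := hj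
        have hR : List.Pairwise
            (fun a b => (a < b → w.get a < w.get b) ∧ (b < a → w.get b < w.get a)) is :=
          (hp.and hpv).imp (fun h => ⟨fun _ => h.2, fun hba => absurd h.1 (not_lt.2 hba.le)⟩)
        have hsymm : Symmetric
            (fun a b : Fin w.length =>
              (a < b → w.get a < w.get b) ∧ (b < a → w.get b < w.get a)) :=
          fun a b h => ⟨h.2, h.1⟩
        have hane : a ≠ b := by
          intro h
          subst h
          exact lt_irrefl _ hij
        haveI : Std.Symm (fun a b : Fin w.length =>
            (a < b → w.get a < w.get b) ∧ (b < a → w.get b < w.get a)) := ⟨fun a b h => hsymm h⟩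
        have hRab := hR.forall ha hb hane
        have hab : a < b := hij
        have hgab := hRab.1 hab
        show ((π (Fin.cast hlen a) : Fin n) : ℕ) < ((π (Fin.cast hlen b) : Fin n) : ℕ)
        have hva := hval (Fin.cast hlen a)
        have hvb := hval (Fin.cast hlen b)
        have hgda : w.getD (Fin.cast hlen a) 0 = w.get a := by
          have h9 : ((Fin.cast hlen a : Fin n) : ℕ) < w.length := a.2
          rw [List.getD_eq_getElem _ _ h9]
          simp
        have hgdb : w.getD (Fin.cast hlen b) 0 = w.get b := by
          have h9 : ((Fin.cast hlen b : Fin n) : ℕ) < w.length := b.2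
          rw [List.getD_eq_getElem _ _ h9]
          simp
        omega
    · have hsortedm : (is.map (Fin.cast hlen)).Pairwise (· ≤ ·) := hpm.imp le_of_lt
      rw [(List.toFinset_sort _ hmnd).2 hsortedm, List.map_map]
      apply List.map_congr_left
      intro a ha
      have h9 : ((Fin.cast hlen a : Fin n) : ℕ) < w.length := a.2
      show w.getD (Fin.cast hlen a) 0 = w.get a
      rw [List.getD_eq_getElem _ _ h9]
      simp


lemma permOf_congr {n : ℕ} {w w' : List ℕ} (h : w = w')
    (hw : w.Nodup) (hlen : w.length = n) (hmem : ∀ x ∈ w, 1 ≤ x ∧ x ≤ n)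
    (hw' : w'.Nodup) (hlen' : w'.length = n) (hmem' : ∀ x ∈ w', 1 ≤ x ∧ x ≤ n) :
    permOf n w hw hlen hmem = permOf n w' hw' hlen' hmem' := by
  subst h; rfl

lemma mem_word_bounds {n : ℕ} (T : OTree) (h : T.edges = n) :
    ∀ x ∈ OTree.wordFrom T 0, 1 ≤ x ∧ x ≤ n := by
  intro x hx
  have h2 := List.mem_toFinset.2 hx
  rw [(OTree.wordP T 0).2] at h2
  have h3 := Finset.mem_Icc.1 h2
  omega

noncomputable def eMap (n : ℕ) : OTree → Equiv.Perm (Fin n) := fun T =>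
  if h : T.edges = n then
    permOf n (OTree.wordFrom T 0) (OTree.wordP T 0).1
      (by rw [OTree.length_wordFrom, h]) (mem_word_bounds T h)
  else 1

/-- For each `k ≥ 1`, the generating polynomial
`F_n^{(k)}(q) = ∑_{132-avoiding π of length n} q^{#(increasing k-patterns of π)}`
equals `∑_{trees T with n edges} q^{∑_{nonroot v} C(level(v)-1, k-1)}`. -/
theorem stmt15 (n k : ℕ) (hk : 1 ≤ k) :
    (∑ᶠ π ∈ {π : Equiv.Perm (Fin n) | Avoids132P π},
        (Polynomial.X : Polynomial ℚ) ^ incCountP π k) =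
      ∑ᶠ T ∈ {T : OTree | T.edges = n},
        (Polynomial.X : Polynomial ℚ) ^ (T.levels.map fun l => (l - 1).choose (k - 1)).sum := by
  classical
  refine (finsum_mem_eq_of_bijOn (eMap n) ⟨?_, ?_, ?_⟩ ?_).symm
  · -- maps to
    intro T hT
    have h : T.edges = n := hT
    show Avoids132P (eMap n T)
    rw [eMap, dif_pos h]
    exact avoids_of_av _ _ _ (OTree.Av_wordFrom T 0)
  · -- InjOn
    intro T1 h1 T2 h2 heq
    have e1 : T1.edges = n := h1
    have e2 : T2.edges = n := h2
    simp only [eMap] at heq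
    rw [dif_pos e1, dif_pos e2] at heq
    have hweq : OTree.wordFrom T1 0 = OTree.wordFrom T2 0 := by
      have hl1 : (OTree.wordFrom T1 0).length = n := by rw [OTree.length_wordFrom, e1]
      have hl2 : (OTree.wordFrom T2 0).length = n := by rw [OTree.length_wordFrom, e2]
      apply List.ext_getElem (by omega)
      intro i hi1 hi2
      have hin : i < n := by omega
      have happ := DFunLike.congr_fun heq ⟨i, hin⟩
      have hv1 := permOf_val (OTree.wordP T1 0).1
        (by rw [OTree.length_wordFrom, e1]) (mem_word_bounds T1 e1) ⟨i, hin⟩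
      have hv2 := permOf_val (OTree.wordP T2 0).1
        (by rw [OTree.length_wordFrom, e2]) (mem_word_bounds T2 e2) ⟨i, hin⟩
      have hb1 := get_bounds (by rw [OTree.length_wordFrom, e1])
        (mem_word_bounds T1 e1) ⟨i, hi1⟩
      have hb2 := get_bounds (by rw [OTree.length_wordFrom, e2])
        (mem_word_bounds T2 e2) ⟨i, hi2⟩
      have hvv : ((permOf n (OTree.wordFrom T1 0) (OTree.wordP T1 0).1
          (by rw [OTree.length_wordFrom, e1]) (mem_word_bounds T1 e1) ⟨i, hin⟩ : Fin n) : ℕ)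
          = ((permOf n (OTree.wordFrom T2 0) (OTree.wordP T2 0).1
          (by rw [OTree.length_wordFrom, e2]) (mem_word_bounds T2 e2) ⟨i, hin⟩ : Fin n) : ℕ) := by
        rw [happ]
      rw [hv1, hv2] at hvv
      simp only [List.get_eq_getElem] at hvv hb1 hb2 ⊢
      omega
    exact OTree.word_inj T1 T2 0 hweq
  · -- SurjOn
    intro π hπ
    have hπA : Avoids132P π := hπ
    set w := List.ofFn (fun i : Fin n => (π i : ℕ) + 1) with hwdef
    have hw : w.Nodup := by
      rw [hwdef, List.nodup_ofFn]
      intro a b hab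
      simp only at hab
      exact π.injective (Fin.ext (by omega))
    have hlenw : w.length = n := by simp [hwdef]
    have htf : w.toFinset = Finset.Icc 1 n := by
      ext x
      simp only [List.mem_toFinset, hwdef, List.mem_ofFn, Set.mem_range, Finset.mem_Icc]
      constructor
      · rintro ⟨i, rfl⟩
        have := (π i).2
        omega
      · rintro ⟨hx1, hx2⟩
        refine ⟨π.symm ⟨x - 1, by omega⟩, ?_⟩
        rw [Equiv.apply_symm_apply]
        show x - 1 + 1 = x
        omega
    have hAv : Av w := av_ofFn hπA
    obtain ⟨T, hTe, hTw⟩ := OTree.exists_tree n 0 w hAv hw (by simpa using htf)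
    refine ⟨T, hTe, ?_⟩
    show eMap n T = π
    rw [eMap, dif_pos hTe]
    rw [permOf_congr hTw _ _ _ hw hlenw
      (fun x hx => by
        have h2 := List.mem_toFinset.2 hx
        rw [htf] at h2
        exact Finset.mem_Icc.1 h2)]
    apply Equiv.ext
    intro i
    apply Fin.ext
    rw [permOf_val]
    have : w.get ⟨(i : ℕ), hlenw.symm ▸ i.2⟩ = (π i : ℕ) + 1 := by
      first
      | (simp [hwdef, List.get_ofFn]; rfl)
      | simp [hwdef, List.get_ofFn]
    rw [this]
    omega
  · -- summand equality
    intro T hT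
    have h : T.edges = n := hT
    have h1 : incCountP (eMap n T) k = NN (OTree.wordFrom T 0) k := by
      rw [eMap, dif_pos h]
      exact incCountP_permOf _ _ _
    rw [h1, OTree.NN_word T 0 k hk]
    rfl
end

section
/- Define F(z,q) = sum_{n,r ≥ 0} f_r(n) z^n q^r, where f_r(n) is the number of 132-avoiding permutations of length n with exactly r patterns 123. Then F equals the ordered-tree generating function in which a vertex at level l is weighted by z·q^{binomial(l-1,2)}, and this series satisfies the recursion obtained from the tree decomposition: if H_m(z,q) denotes the tree series with level-l vertices weighted z·q^{binomial(l+m-1,2)}, then H_m = 1/(1 - z q^{binomial(m,2)} H_{m+1}). -/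
/-- `F(z,q) = ∑_{n,r} f_r(n) z^n q^r`, where `f_r(n)` counts 132-avoiding
permutations of length `n` with exactly `r` patterns 123. -/
noncomputable def permGF : PowerSeries (Polynomial ℚ) :=
  PowerSeries.mk fun n =>
    ∑ᶠ π ∈ {π : Equiv.Perm (Fin n) | Avoids132P π},
      (Polynomial.X : Polynomial ℚ) ^ incCountP π 3

/-- `H_m(z,q)`: the ordered-tree series in which a vertex at level `l` is
weighted `z·q^{C(l+m-1, 2)}`. -/
noncomputable def shiftedTreeGF (m : ℕ) : PowerSeries (Polynomial ℚ) :=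
  PowerSeries.mk fun n =>
    ∑ᶠ T ∈ {T : OTree | T.edges = n},
      (Polynomial.X : Polynomial ℚ) ^ (T.levels.map fun l => (l + m - 1).choose 2).sum

namespace Stmt16Aux
open Finset Equiv

def OTree.cons : OTree → OTree → OTree
  | t, .node ts => .node (t :: ts)

lemma edges_cons (t u : OTree) : (OTree.cons t u).edges = t.edges + 1 + u.edges := by
  cases u with | node ts => simp [OTree.cons, OTree.edges]

lemma levels_cons (t u : OTree) :
    (OTree.cons t u).levels = ((1 : ℕ) ::ₘ (t.levels.map (· + 1))) + u.levels := by
  cases u with | node ts => simp [OTree.cons, OTree.levels]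

lemma cons_injective2 : ∀ {t u t' u' : OTree}, OTree.cons t u = OTree.cons t' u' → t = t' ∧ u = u'
  | t, .node ts, t', .node ts', h => by
      simp only [OTree.cons, OTree.node.injEq, List.cons.injEq] at h
      exact ⟨h.1, by rw [h.2]⟩

lemma edges_eq_zero {T : OTree} : T.edges = 0 ↔ T = OTree.node [] := by
  constructor
  · intro h
    cases T with
    | node l =>
      cases l with
      | nil => rfl
      | cons t ts => simp [OTree.edges] at h
  · rintro rfl; simp [OTree.edges]

lemma eq_cons {T : OTree} (h : T.edges ≠ 0) : ∃ t u, T = OTree.cons t u := by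
  cases T with
  | node l =>
    cases l with
    | nil => simp [OTree.edges] at h
    | cons t ts => exact ⟨t, .node ts, rfl⟩

lemma finite_trees (n : ℕ) : {T : OTree | T.edges = n}.Finite := by
  induction n using Nat.strong_induction_on with
  | _ n ih =>
    cases n with
    | zero =>
      have : {T : OTree | T.edges = 0} ⊆ {OTree.node []} := by
        intro T hT; simpa using edges_eq_zero.mp hT
      exact (Set.finite_singleton _).subset this
    | succ n =>
      have hsub : {T : OTree | T.edges = n + 1} ⊆
          (fun p : OTree × OTree => OTree.cons p.1 p.2) ''
            (⋃ a ∈ Finset.range (n + 1),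
              {t : OTree | t.edges = a} ×ˢ {u : OTree | u.edges = n - a}) := by
        intro T hT
        simp only [Set.mem_setOf_eq] at hT
        have hne : T.edges ≠ 0 := by omega
        obtain ⟨t, u, rfl⟩ := eq_cons hne
        rw [edges_cons] at hT
        refine ⟨(t, u), ?_, rfl⟩
        simp only [Set.mem_iUnion, Finset.mem_range, Set.mem_prod, Set.mem_setOf_eq]
        exact ⟨t.edges, by omega, rfl, by omega⟩
      refine (Set.Finite.image _ ?_).subset hsub
      refine Set.Finite.biUnion (Finset.range (n + 1)).finite_toSet ?_
      intro a ha
      simp only [Finset.coe_range, Set.mem_Iio] at ha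
      exact (ih a (by omega)).prod (ih (n - a) (by omega))

noncomputable def treeFS (n : ℕ) : Finset OTree := (finite_trees n).toFinset

lemma mem_treeFS {n : ℕ} {T : OTree} : T ∈ treeFS n ↔ T.edges = n := by
  simp [treeFS, Set.Finite.mem_toFinset]

lemma treeFS_zero : treeFS 0 = {OTree.node []} := by
  ext T; simp [mem_treeFS, edges_eq_zero]

lemma tree_sum_succ {R : Type*} [AddCommMonoid R] (n : ℕ) (f : OTree → R) :
    ∑ T ∈ treeFS (n + 1), f T =
      ∑ ab ∈ antidiagonal n, ∑ p ∈ treeFS ab.1 ×ˢ treeFS ab.2, f (OTree.cons p.1 p.2) := by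
  rw [← Finset.sum_sigma ((antidiagonal n)) (fun ab => treeFS ab.1 ×ˢ treeFS ab.2)
    (fun x => f (OTree.cons x.2.1 x.2.2))]
  refine (Finset.sum_bij (fun x _ => OTree.cons x.2.1 x.2.2) ?_ ?_ ?_ ?_).symm
  · rintro ⟨⟨a, b⟩, t, u⟩ hx
    simp only [Finset.mem_sigma, Finset.HasAntidiagonal.mem_antidiagonal, Finset.mem_product, mem_treeFS] at hx
    simp only [mem_treeFS, edges_cons]
    omega
  · rintro ⟨⟨a, b⟩, t, u⟩ hx ⟨⟨a', b'⟩, t', u'⟩ hx' h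
    obtain ⟨h1, h2⟩ := cons_injective2 h
    simp only [Finset.mem_sigma, Finset.HasAntidiagonal.mem_antidiagonal, Finset.mem_product, mem_treeFS] at hx hx'
    subst h1; subst h2
    obtain ⟨rfl, rfl⟩ : a = a' ∧ b = b' := ⟨by rw [← hx.2.1, hx'.2.1], by rw [← hx.2.2, hx'.2.2]⟩
    rfl
  · intro T hT
    simp only [mem_treeFS] at hT
    have hne : T.edges ≠ 0 := by omega
    obtain ⟨t, u, rfl⟩ := eq_cons hne
    rw [edges_cons] at hT
    refine ⟨⟨(t.edges, u.edges), t, u⟩, ?_, rfl⟩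
    exact Finset.mem_sigma.mpr ⟨Finset.HasAntidiagonal.mem_antidiagonal.mpr
        (show t.edges + u.edges = n by omega),
      Finset.mem_product.mpr ⟨mem_treeFS.mpr rfl, mem_treeFS.mpr rfl⟩⟩
  · intros; rfl

/-- weight of a tree at shift m -/
def wt (m : ℕ) (T : OTree) : ℕ := (T.levels.map fun l => (l + m - 1).choose 2).sum

lemma wt_cons (m : ℕ) (t u : OTree) :
    wt m (OTree.cons t u) = m.choose 2 + wt (m + 1) t + wt m u := by
  simp only [wt, levels_cons, Multiset.map_add, Multiset.sum_add, Multiset.map_cons,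
    Multiset.sum_cons, Multiset.map_map]
  have h1 : (1 + m - 1).choose 2 = m.choose 2 := by congr 1; omega
  have h2 : ∀ l : ℕ, ((l + 1) + m - 1).choose 2 = (l + (m + 1) - 1).choose 2 := by
    intro l; congr 1; omega
  simp only [Function.comp]
  rw [h1]
  have : (Multiset.map (fun x => (x + 1 + m - 1).choose 2) t.levels)
      = Multiset.map (fun l => (l + (m + 1) - 1).choose 2) t.levels := by
    apply Multiset.map_congr rfl; intro x _; exact h2 x
  rw [this]

local notation "q" => (Polynomial.X : Polynomial ℚ)

lemma coeff_shifted (m n : ℕ) :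
    PowerSeries.coeff n (shiftedTreeGF m) = ∑ T ∈ treeFS n, q ^ wt m T := by
  rw [shiftedTreeGF, PowerSeries.coeff_mk]
  exact finsum_mem_eq_finite_toFinset_sum _ (finite_trees n)

lemma wt_leaf (m : ℕ) : wt m (OTree.node []) = 0 := by simp [wt, OTree.levels]

lemma coeff_shifted_zero (m : ℕ) : PowerSeries.coeff 0 (shiftedTreeGF m) = 1 := by
  rw [coeff_shifted, treeFS_zero, Finset.sum_singleton, wt_leaf, pow_zero]

lemma coeff_shifted_succ (m n : ℕ) :
    PowerSeries.coeff (n + 1) (shiftedTreeGF m) =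
      q ^ m.choose 2 * ∑ ab ∈ antidiagonal n,
        PowerSeries.coeff ab.1 (shiftedTreeGF (m + 1)) *
          PowerSeries.coeff ab.2 (shiftedTreeGF m) := by
  rw [coeff_shifted, tree_sum_succ]
  rw [Finset.mul_sum]
  refine Finset.sum_congr rfl ?_
  rintro ⟨a, b⟩ _
  rw [coeff_shifted, coeff_shifted, Finset.sum_mul_sum, ← Finset.sum_product', Finset.mul_sum]
  refine Finset.sum_congr rfl ?_
  rintro ⟨t, u⟩ _
  rw [wt_cons, pow_add, pow_add, mul_assoc]

lemma tree_rec (m : ℕ) :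
    shiftedTreeGF m = 1 + PowerSeries.C (q ^ m.choose 2) * PowerSeries.X *
      shiftedTreeGF (m + 1) * shiftedTreeGF m := by
  ext n
  cases n with
  | zero =>
    rw [coeff_shifted_zero, map_add]
    have : PowerSeries.C (q ^ m.choose 2) * PowerSeries.X *
        shiftedTreeGF (m + 1) * shiftedTreeGF m =
        (PowerSeries.C (q ^ m.choose 2) * (shiftedTreeGF (m + 1) * shiftedTreeGF m)) *
          PowerSeries.X := by ring
    rw [this, PowerSeries.coeff_zero_mul_X]
    simp
  | succ n =>
    rw [coeff_shifted_succ, map_add]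
    have : PowerSeries.C (q ^ m.choose 2) * PowerSeries.X *
        shiftedTreeGF (m + 1) * shiftedTreeGF m =
        (PowerSeries.C (q ^ m.choose 2) * (shiftedTreeGF (m + 1) * shiftedTreeGF m)) *
          PowerSeries.X := by ring
    rw [this, PowerSeries.coeff_succ_mul_X, PowerSeries.coeff_C_mul, PowerSeries.coeff_mul]
    simp

lemma stmt16_part2 (m : ℕ) :
    shiftedTreeGF m *
      (1 - PowerSeries.C (q ^ m.choose 2) * PowerSeries.X * shiftedTreeGF (m + 1)) = 1 := by
  linear_combination (tree_rec m)

variable {a b : ℕ}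

def posL (a b : ℕ) (i : Fin a) : Fin (a + 1 + b) := ⟨i.1, by have := i.2; omega⟩
def posM (a b : ℕ) : Fin (a + 1 + b) := ⟨a, by omega⟩
def posR (a b : ℕ) (j : Fin b) : Fin (a + 1 + b) := ⟨a + 1 + j.1, by have := j.2; omega⟩

lemma pos_cases (x : Fin (a + 1 + b)) :
    (∃ i, x = posL a b i) ∨ x = posM a b ∨ ∃ j, x = posR a b j := by
  rcases lt_trichotomy x.1 a with h | h | h
  · exact Or.inl ⟨⟨x.1, h⟩, Fin.ext rfl⟩
  · exact Or.inr (Or.inl (Fin.ext h))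
  · exact Or.inr (Or.inr ⟨⟨x.1 - (a + 1), by have := x.2; omega⟩, Fin.ext (by simp [posR]; omega)⟩)

def glueFun (α : Perm (Fin a)) (β : Perm (Fin b)) (i : Fin (a + 1 + b)) : Fin (a + 1 + b) :=
  if h : i.1 < a then ⟨b + (α ⟨i.1, h⟩).1, by have := (α ⟨i.1, h⟩).2; omega⟩
  else if h2 : i.1 = a then ⟨a + b, by omega⟩
  else ⟨(β ⟨i.1 - (a + 1), by have := i.2; omega⟩).1,
    by have := (β ⟨i.1 - (a + 1), by have := i.2; omega⟩).2; omega⟩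

lemma glueFun_posL (α : Perm (Fin a)) (β : Perm (Fin b)) (i : Fin a) :
    (glueFun α β (posL a b i)).1 = b + (α i).1 := by
  have h : (posL a b i).1 < a := i.2
  rw [glueFun, dif_pos h]
  simp [posL]

lemma glueFun_posM (α : Perm (Fin a)) (β : Perm (Fin b)) :
    (glueFun α β (posM a b)).1 = a + b := by
  have h : ¬ ((posM a b).1 < a) := by simp [posM]
  have h2 : (posM a b).1 = a := rfl
  rw [glueFun, dif_neg h, dif_pos h2]

lemma glueFun_posR (α : Perm (Fin a)) (β : Perm (Fin b)) (j : Fin b) :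
    (glueFun α β (posR a b j)).1 = (β j).1 := by
  have h : ¬ ((posR a b j).1 < a) := by simp [posR]; omega
  have h2 : ¬ ((posR a b j).1 = a) := by simp [posR]; omega
  rw [glueFun, dif_neg h, dif_neg h2]
  exact congrArg Fin.val (congrArg β (Fin.ext (by simp only [posR]; omega)))

lemma glueFun_injective (α : Perm (Fin a)) (β : Perm (Fin b)) :
    Function.Injective (glueFun α β) := by
  intro x y hxy
  have hv := congrArg Fin.val hxy
  rcases pos_cases x with ⟨i, rfl⟩ | rfl | ⟨j, rfl⟩ <;>
    rcases pos_cases y with ⟨i', rfl⟩ | rfl | ⟨j', rfl⟩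
  · rw [glueFun_posL, glueFun_posL] at hv
    have : α i = α i' := Fin.ext (by omega)
    rw [α.injective this]
  · rw [glueFun_posL, glueFun_posM] at hv
    have := (α i).2; omega
  · rw [glueFun_posL, glueFun_posR] at hv
    have := (β j').2; omega
  · rw [glueFun_posM, glueFun_posL] at hv
    have := (α i').2; omega
  · rfl
  · rw [glueFun_posM, glueFun_posR] at hv
    have := (β j').2; omega
  · rw [glueFun_posR, glueFun_posL] at hv
    have := (β j).2; omega
  · rw [glueFun_posR, glueFun_posM] at hv
    have := (β j).2; omega
  · rw [glueFun_posR, glueFun_posR] at hv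
    have : β j = β j' := Fin.ext hv
    rw [β.injective this]

noncomputable def glue (α : Perm (Fin a)) (β : Perm (Fin b)) : Perm (Fin (a + 1 + b)) :=
  Equiv.ofBijective _ (Finite.injective_iff_bijective.mp (glueFun_injective α β))

lemma glue_posL (α : Perm (Fin a)) (β : Perm (Fin b)) (i : Fin a) :
    (glue α β (posL a b i)).1 = b + (α i).1 := glueFun_posL α β i
lemma glue_posM (α : Perm (Fin a)) (β : Perm (Fin b)) :
    (glue α β (posM a b)).1 = a + b := glueFun_posM α β
lemma glue_posR (α : Perm (Fin a)) (β : Perm (Fin b)) (j : Fin b) :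
    (glue α β (posR a b j)).1 = (β j).1 := glueFun_posR α β j

lemma glue_val_high (α : Perm (Fin a)) (β : Perm (Fin b)) {x : Fin (a + 1 + b)}
    (h : a < x.1) : (glue α β x).1 < b := by
  rcases pos_cases x with ⟨i, rfl⟩ | rfl | ⟨j, rfl⟩
  · have := i.2; simp [posL] at h; omega
  · simp [posM] at h
  · rw [glue_posR]; exact (β j).2

lemma glue_val_low (α : Perm (Fin a)) (β : Perm (Fin b)) {x : Fin (a + 1 + b)}
    (h : x.1 ≤ a) : b ≤ (glue α β x).1 := by
  rcases pos_cases x with ⟨i, rfl⟩ | rfl | ⟨j, rfl⟩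
  · rw [glue_posL]; omega
  · rw [glue_posM]; omega
  · simp [posR] at h; omega


lemma glue_avoids {α : Perm (Fin a)} {β : Perm (Fin b)}
    (hα : Avoids132P α) (hβ : Avoids132P β) : Avoids132P (glue α β) := by
  rintro ⟨x, y, z, hxy, hyz, h1, h2⟩
  rcases pos_cases x with ⟨i1, rfl⟩ | rfl | ⟨j1, rfl⟩ <;>
    rcases pos_cases y with ⟨i2, rfl⟩ | rfl | ⟨j2, rfl⟩ <;>
      rcases pos_cases z with ⟨i3, rfl⟩ | rfl | ⟨j3, rfl⟩ <;>
  · simp only [Fin.lt_def] at hxy hyz h1 h2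
    simp only [glue_posL, glue_posM, glue_posR] at h1 h2
    simp only [posL, posM, posR] at hxy hyz
    try have hb1 := (α i1).2
    try have hb2 := (α i2).2
    try have hb3 := (α i3).2
    try have hc1 := (β j1).2
    try have hc2 := (β j2).2
    try have hc3 := (β j3).2
    first
    | omega
    | exact hα ⟨i1, i2, i3, by rw [Fin.lt_def]; omega, by rw [Fin.lt_def]; omega,
        by rw [Fin.lt_def]; omega, by rw [Fin.lt_def]; omega⟩
    | exact hβ ⟨j1, j2, j3, by rw [Fin.lt_def]; omega, by rw [Fin.lt_def]; omega,
        by rw [Fin.lt_def]; omega, by rw [Fin.lt_def]; omega⟩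


def IncSet {n : ℕ} (π : Perm (Fin n)) (k : ℕ) : Finset (Finset (Fin n)) :=
  ((Finset.univ : Finset (Finset (Fin n))).filter
    (fun S => S.card = k ∧ ∀ i ∈ S, ∀ j ∈ S, i < j → π i < π j))

lemma incCountP_eq {n : ℕ} (π : Perm (Fin n)) (k : ℕ) : incCountP π k = (IncSet π k).card := rfl

lemma mem_IncSet {n : ℕ} {π : Perm (Fin n)} {k : ℕ} {S : Finset (Fin n)} :
    S ∈ IncSet π k ↔ S.card = k ∧ ∀ i ∈ S, ∀ j ∈ S, i < j → π i < π j := by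
  simp [IncSet]

def emL (a b : ℕ) : Fin a ↪ Fin (a + 1 + b) :=
  ⟨posL a b, fun i i' h => by
    have := congrArg Fin.val h
    simp only [posL] at this
    exact Fin.ext this⟩
def emR (a b : ℕ) : Fin b ↪ Fin (a + 1 + b) :=
  ⟨posR a b, fun j j' h => by
    have := congrArg Fin.val h
    simp only [posR] at this
    exact Fin.ext (by omega)⟩

lemma emL_apply (i : Fin a) : emL a b i = posL a b i := rfl
lemma emR_apply (j : Fin b) : emR a b j = posR a b j := rfl

lemma dichotomy {α : Perm (Fin a)} {β : Perm (Fin b)} {k : ℕ} {S : Finset (Fin (a + 1 + b))}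
    (hS : S ∈ IncSet (glue α β) k) {x0 : Fin (a + 1 + b)} (hx0 : x0 ∈ S) (hx0a : x0.1 ≤ a) :
    ∀ x ∈ S, x.1 ≤ a := by
  intro x hx
  by_contra hgt
  push_neg at hgt
  have hlt : x0 < x := by rw [Fin.lt_def]; omega
  have := (mem_IncSet.mp hS).2 x0 hx0 x hx hlt
  rw [Fin.lt_def] at this
  have h1 := glue_val_low α β hx0a
  have h2 := glue_val_high α β hgt
  omega

lemma incCount_glue (α : Perm (Fin a)) (β : Perm (Fin b)) (k : ℕ) :
    incCountP (glue α β) (k + 1) =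
      incCountP α (k + 1) + incCountP α k + incCountP β (k + 1) := by
  classical
  simp only [incCountP_eq]
  set G := glue α β with hG
  set F := IncSet G (k + 1) with hF
  set P : Finset (Fin (a + 1 + b)) → Prop := fun S => ∀ x ∈ S, a < x.1 with hP
  have hsplit1 : (F.filter P).card + (F.filter (fun S => ¬ P S)).card = F.card :=
    Finset.card_filter_add_card_filter_not _
  have hsplit2 : ((F.filter (fun S => ¬ P S)).filter (fun S => posM a b ∈ S)).card +
      ((F.filter (fun S => ¬ P S)).filter (fun S => posM a b ∉ S)).card =
      (F.filter (fun S => ¬ P S)).card := by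
    have := Finset.card_filter_add_card_filter_not
      (s := F.filter (fun S => ¬ P S)) (p := fun S => posM a b ∈ S)
    simpa using this
  -- (1) β part
  have e1 : (F.filter P).card = (IncSet β (k + 1)).card := by
    refine (Finset.card_bij (fun T _ => T.map (emR a b)) ?_ ?_ ?_).symm
    · intro T hT
      obtain ⟨hcard, hinc⟩ := mem_IncSet.mp hT
      rw [Finset.mem_filter]
      refine ⟨mem_IncSet.mpr ⟨by simp [hcard], ?_⟩, ?_⟩
      · intro x hx y hy hxy
        obtain ⟨j, hj, rfl⟩ := Finset.mem_map.mp hx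
        obtain ⟨j', hj', rfl⟩ := Finset.mem_map.mp hy
        have hjj' : j < j' := by
          rw [Fin.lt_def] at hxy ⊢
          simp only [emR_apply, posR] at hxy
          omega
        have := hinc j hj j' hj' hjj'
        rw [Fin.lt_def] at this ⊢
        show (G (posR a b j)).1 < (G (posR a b j')).1
        rw [hG, glue_posR, glue_posR]
        omega
      · intro x hx
        obtain ⟨j, hj, rfl⟩ := Finset.mem_map.mp hx
        simp only [emR_apply, posR]
        omega
    · intro T hT T' hT' h
      exact Finset.map_injective _ h
    · intro S hS
      rw [Finset.mem_filter] at hS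
      obtain ⟨hSF, hSP⟩ := hS
      obtain ⟨hcard, hinc⟩ := mem_IncSet.mp hSF
      set T : Finset (Fin b) := Finset.univ.filter (fun j => posR a b j ∈ S) with hT
      have hrep : S = T.map (emR a b) := by
        ext x
        simp only [Finset.mem_map, hT, Finset.mem_filter, Finset.mem_univ, true_and]
        constructor
        · intro hx
          have hgt := hSP x hx
          refine ⟨⟨x.1 - (a + 1), by have := x.2; omega⟩, ?_, ?_⟩
          · have : posR a b ⟨x.1 - (a + 1), by have := x.2; omega⟩ = x :=
              Fin.ext (by simp only [posR]; omega)
            rwa [this]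
          · exact Fin.ext (by simp only [emR_apply, posR]; omega)
        · rintro ⟨j, hj, rfl⟩
          exact hj
      refine ⟨T, ?_, hrep.symm⟩
      refine mem_IncSet.mpr ⟨?_, ?_⟩
      · have := congrArg Finset.card hrep
        rw [Finset.card_map] at this
        omega
      · intro j hj j' hj' hjj'
        rw [hT, Finset.mem_filter] at hj hj'
        have hpos : posR a b j < posR a b j' := by
          rw [Fin.lt_def]; simp only [posR]; rw [Fin.lt_def] at hjj'; omega
        have := hinc _ hj.2 _ hj'.2 hpos
        rw [Fin.lt_def] at this ⊢
        rw [hG, glue_posR, glue_posR] at this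
        exact this
  -- (2) α full part
  have e2 : ((F.filter (fun S => ¬ P S)).filter (fun S => posM a b ∉ S)).card =
      (IncSet α (k + 1)).card := by
    refine (Finset.card_bij (fun T _ => T.map (emL a b)) ?_ ?_ ?_).symm
    · intro T hT
      obtain ⟨hcard, hinc⟩ := mem_IncSet.mp hT
      rw [Finset.mem_filter, Finset.mem_filter]
      refine ⟨⟨mem_IncSet.mpr ⟨by simp [hcard], ?_⟩, ?_⟩, ?_⟩
      · intro x hx y hy hxy
        obtain ⟨i, hi, rfl⟩ := Finset.mem_map.mp hx
        obtain ⟨i', hi', rfl⟩ := Finset.mem_map.mp hy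
        have hii' : i < i' := by
          rw [Fin.lt_def] at hxy ⊢
          simpa only [emL_apply, posL] using hxy
        have := hinc i hi i' hi' hii'
        rw [Fin.lt_def] at this ⊢
        show (G (posL a b i)).1 < (G (posL a b i')).1
        rw [hG, glue_posL, glue_posL]
        omega
      · intro hPS
        have hne : T.Nonempty := Finset.card_pos.mp (by omega)
        obtain ⟨t0, ht0⟩ := hne
        have := hPS (emL a b t0) (Finset.mem_map_of_mem _ ht0)
        simp only [emL_apply, posL] at this
        have := t0.2; omega
      · intro hmem
        obtain ⟨i, _, hi⟩ := Finset.mem_map.mp hmem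
        have := congrArg Fin.val hi
        simp only [emL_apply, posL, posM] at this
        have := i.2; omega
    · intro T hT T' hT' h
      exact Finset.map_injective _ h
    · intro S hS
      rw [Finset.mem_filter, Finset.mem_filter] at hS
      obtain ⟨⟨hSF, hSnP⟩, hSM⟩ := hS
      obtain ⟨hcard, hinc⟩ := mem_IncSet.mp hSF
      simp only [hP] at hSnP
      push_neg at hSnP
      obtain ⟨x0, hx0, hx0a⟩ := hSnP
      have hall : ∀ x ∈ S, x.1 < a := by
        intro x hx
        have hle := dichotomy hSF hx0 hx0a x hx
        rcases lt_or_eq_of_le hle with h | h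
        · exact h
        · have hpx : posM a b = x := Fin.ext h.symm
          rw [hpx] at hSM
          exact absurd hx hSM
      set T : Finset (Fin a) := Finset.univ.filter (fun i => posL a b i ∈ S) with hT
      have hrep : S = T.map (emL a b) := by
        ext x
        simp only [Finset.mem_map, hT, Finset.mem_filter, Finset.mem_univ, true_and]
        constructor
        · intro hx
          have hlt := hall x hx
          refine ⟨⟨x.1, hlt⟩, ?_, ?_⟩
          · have : posL a b ⟨x.1, hlt⟩ = x := Fin.ext rfl
            rwa [this]
          · exact Fin.ext rfl
        · rintro ⟨i, hi, rfl⟩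
          exact hi
      refine ⟨T, ?_, hrep.symm⟩
      refine mem_IncSet.mpr ⟨?_, ?_⟩
      · have := congrArg Finset.card hrep
        rw [Finset.card_map] at this
        omega
      · intro i hi i' hi' hii'
        rw [hT, Finset.mem_filter] at hi hi'
        have hpos : posL a b i < posL a b i' := by
          rw [Fin.lt_def]; simp only [posL]; rw [Fin.lt_def] at hii'; omega
        have := hinc _ hi.2 _ hi'.2 hpos
        rw [Fin.lt_def] at this ⊢
        rw [hG, glue_posL, glue_posL] at this
        omega
  -- (3) α with max part
  have e3 : ((F.filter (fun S => ¬ P S)).filter (fun S => posM a b ∈ S)).card =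
      (IncSet α k).card := by
    refine (Finset.card_bij (fun T _ => insert (posM a b) (T.map (emL a b))) ?_ ?_ ?_).symm
    · intro T hT
      obtain ⟨hcard, hinc⟩ := mem_IncSet.mp hT
      have hMnot : posM a b ∉ T.map (emL a b) := by
        intro hmem
        obtain ⟨i, _, hi⟩ := Finset.mem_map.mp hmem
        have := congrArg Fin.val hi
        simp only [emL_apply, posL, posM] at this
        have := i.2; omega
      rw [Finset.mem_filter, Finset.mem_filter]
      refine ⟨⟨mem_IncSet.mpr ⟨?_, ?_⟩, ?_⟩, Finset.mem_insert_self _ _⟩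
      · rw [Finset.card_insert_of_notMem hMnot, Finset.card_map, hcard]
      · intro x hx y hy hxy
        rcases Finset.mem_insert.mp hx with rfl | hx'
        · rcases Finset.mem_insert.mp hy with rfl | hy'
          · exact absurd hxy (lt_irrefl _)
          · obtain ⟨i, hi, rfl⟩ := Finset.mem_map.mp hy'
            rw [Fin.lt_def] at hxy
            simp only [emL_apply, posL, posM] at hxy
            have := i.2; omega
        · rcases Finset.mem_insert.mp hy with rfl | hy'
          · obtain ⟨i, hi, rfl⟩ := Finset.mem_map.mp hx'
            rw [Fin.lt_def]
            show (G (posL a b i)).1 < (G (posM a b)).1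
            rw [hG, glue_posL, glue_posM]
            have := (α i).2; omega
          · obtain ⟨i, hi, rfl⟩ := Finset.mem_map.mp hx'
            obtain ⟨i', hi', rfl⟩ := Finset.mem_map.mp hy'
            have hii' : i < i' := by
              rw [Fin.lt_def] at hxy ⊢
              simpa only [emL_apply, posL] using hxy
            have := hinc i hi i' hi' hii'
            rw [Fin.lt_def] at this ⊢
            show (G (posL a b i)).1 < (G (posL a b i')).1
            rw [hG, glue_posL, glue_posL]
            omega
      · intro hPS
        have := hPS (posM a b) (Finset.mem_insert_self _ _)
        simp only [posM] at this
        omega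
    · intro T hT T' hT' h
      have hMnot : ∀ (U : Finset (Fin a)), posM a b ∉ U.map (emL a b) := by
        intro U hmem
        obtain ⟨i, _, hi⟩ := Finset.mem_map.mp hmem
        have := congrArg Fin.val hi
        simp only [emL_apply, posL, posM] at this
        have := i.2; omega
      have := congrArg (fun S => Finset.erase S (posM a b)) h
      simp only [Finset.erase_insert (hMnot T), Finset.erase_insert (hMnot T')] at this
      exact Finset.map_injective _ this
    · intro S hS
      rw [Finset.mem_filter, Finset.mem_filter] at hS
      obtain ⟨⟨hSF, hSnP⟩, hSM⟩ := hS
      obtain ⟨hcard, hinc⟩ := mem_IncSet.mp hSF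
      have hall : ∀ x ∈ S, x ≠ posM a b → x.1 < a := by
        intro x hx hxne
        have hle := dichotomy hSF hSM (le_refl a) x hx
        rcases lt_or_eq_of_le hle with h | h
        · exact h
        · exact absurd (Fin.ext h) hxne
      set T : Finset (Fin a) := Finset.univ.filter (fun i => posL a b i ∈ S) with hT
      have hrep : S = insert (posM a b) (T.map (emL a b)) := by
        ext x
        simp only [Finset.mem_insert, Finset.mem_map, hT, Finset.mem_filter, Finset.mem_univ,
          true_and]
        constructor
        · intro hx
          by_cases hxM : x = posM a b
          · exact Or.inl hxM
          · refine Or.inr ⟨⟨x.1, hall x hx hxM⟩, ?_, Fin.ext rfl⟩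
            have : posL a b ⟨x.1, hall x hx hxM⟩ = x := Fin.ext rfl
            rwa [this]
        · rintro (rfl | ⟨i, hi, rfl⟩)
          · exact hSM
          · exact hi
      refine ⟨T, ?_, hrep.symm⟩
      refine mem_IncSet.mpr ⟨?_, ?_⟩
      · have hMnot : posM a b ∉ T.map (emL a b) := by
          intro hmem
          obtain ⟨i, _, hi⟩ := Finset.mem_map.mp hmem
          have := congrArg Fin.val hi
          simp only [emL_apply, posL, posM] at this
          have := i.2; omega
        have := congrArg Finset.card hrep
        rw [Finset.card_insert_of_notMem hMnot, Finset.card_map] at this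
        omega
      · intro i hi i' hi' hii'
        rw [hT, Finset.mem_filter] at hi hi'
        have hpos : posL a b i < posL a b i' := by
          rw [Fin.lt_def]; simp only [posL]; rw [Fin.lt_def] at hii'; omega
        have := hinc _ hi.2 _ hi'.2 hpos
        rw [Fin.lt_def] at this ⊢
        rw [hG, glue_posL, glue_posL] at this
        omega
  omega


lemma incCountP_one {n : ℕ} (π : Perm (Fin n)) : incCountP π 1 = n := by
  rw [incCountP_eq]
  have himg : IncSet π 1 = Finset.univ.image (fun i : Fin n => ({i} : Finset (Fin n))) := by
    ext S
    simp only [mem_IncSet, Finset.mem_image, Finset.mem_univ, true_and]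
    constructor
    · rintro ⟨hcard, _⟩
      obtain ⟨i, rfl⟩ := Finset.card_eq_one.mp hcard
      exact ⟨i, rfl⟩
    · rintro ⟨i, rfl⟩
      refine ⟨Finset.card_singleton i, ?_⟩
      intro x hx y hy hxy
      rw [Finset.mem_singleton] at hx hy
      subst hx; subst hy
      exact absurd hxy (lt_irrefl _)
  rw [himg, Finset.card_image_of_injective _ Finset.singleton_injective, Finset.card_univ,
    Fintype.card_fin]

lemma incCountP_of_lt {n k : ℕ} (π : Perm (Fin n)) (h : n < k) : incCountP π k = 0 := by
  rw [incCountP_eq, IncSet, Finset.card_eq_zero, Finset.filter_eq_empty_iff]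
  rintro S _ ⟨hc, -⟩
  have := Finset.card_le_univ S
  simp only [Finset.card_univ, Fintype.card_fin] at this
  omega

def statP {n : ℕ} (m : ℕ) (π : Perm (Fin n)) : ℕ :=
  incCountP π 3 + m * incCountP π 2 + m.choose 2 * n

lemma stat_glue (m : ℕ) (α : Perm (Fin a)) (β : Perm (Fin b)) :
    statP m (glue α β) = m.choose 2 + statP (m + 1) α + statP m β := by
  have h3 : incCountP (glue α β) 3 = incCountP α 3 + incCountP α 2 + incCountP β 3 :=
    incCount_glue α β 2
  have h2 : incCountP (glue α β) 2 = incCountP α 2 + incCountP α 1 + incCountP β 2 :=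
    incCount_glue α β 1
  have h1 : incCountP α 1 = a := incCountP_one α
  have hch : (m + 1).choose 2 = m.choose 2 + m := by
    have h : (m + 1).choose 2 = m.choose 1 + m.choose 2 := Nat.choose_succ_succ m 1
    simp only [Nat.choose_one_right] at h
    omega
  simp only [statP]
  rw [h3, h2, h1, hch]
  ring

noncomputable def permOfInj {c : ℕ} (f : Fin c → Fin c) (hf : Function.Injective f) :
    Perm (Fin c) := Equiv.ofBijective f (Finite.injective_iff_bijective.mp hf)

lemma permOfInj_apply {c : ℕ} (f : Fin c → Fin c) (hf : Function.Injective f) (x : Fin c) :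
    permOfInj f hf x = f x := rfl

def castPerm {N M : ℕ} (h : N = M) (σ : Perm (Fin N)) : Perm (Fin M) := h ▸ σ

lemma castPerm_val {N M : ℕ} (h : N = M) (σ : Perm (Fin N)) (x : Fin M) :
    (castPerm h σ x).1 = (σ ⟨x.1, h ▸ x.2⟩).1 := by subst h; rfl

lemma incCountP_castPerm {N M : ℕ} (h : N = M) (σ : Perm (Fin N)) (k : ℕ) :
    incCountP (castPerm h σ) k = incCountP σ k := by subst h; rfl

lemma avoids_castPerm {N M : ℕ} (h : N = M) (σ : Perm (Fin N)) :
    Avoids132P (castPerm h σ) ↔ Avoids132P σ := by subst h; rfl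

lemma statP_castPerm {N M : ℕ} (m : ℕ) (h : N = M) (σ : Perm (Fin N)) :
    statP m (castPerm h σ) = statP m σ := by subst h; rfl

lemma castPerm_injective {N M : ℕ} (h : N = M) : Function.Injective (castPerm (N := N) h) := by
  subst h; exact fun σ σ' hh => hh

def castPerm' (M : ℕ) {N : ℕ} (σ : Perm (Fin N)) : Perm (Fin M) :=
  if h : N = M then castPerm h σ else 1

lemma castPerm'_eq {N M : ℕ} (h : N = M) (σ : Perm (Fin N)) :
    castPerm' M σ = castPerm h σ := dif_pos h

lemma glue_injective2 {α α' : Perm (Fin a)} {β β' : Perm (Fin b)}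
    (h : glue α β = glue α' β') : α = α' ∧ β = β' := by
  constructor
  · apply Equiv.ext
    intro i
    have := congrArg (fun σ : Perm (Fin (a+1+b)) => (σ (posL a b i)).1) h
    simp only [glue_posL] at this
    exact Fin.ext (by omega)
  · apply Equiv.ext
    intro j
    have := congrArg (fun σ : Perm (Fin (a+1+b)) => (σ (posR a b j)).1) h
    simp only [glue_posR] at this
    exact Fin.ext this

set_option maxHeartbeats 2000000 in
lemma decomp {n : ℕ} (π : Perm (Fin (n + 1))) (hπ : Avoids132P π) :
    ∃ (a b : ℕ) (h : a + 1 + b = n + 1) (α : Perm (Fin a)) (β : Perm (Fin b)),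
      a + b = n ∧ Avoids132P α ∧ Avoids132P β ∧ π = castPerm h (glue α β) := by
  set top : Fin (n + 1) := ⟨n, n.lt_succ_self⟩ with htop
  set p : Fin (n + 1) := π.symm top with hp
  have hπp : π p = top := π.apply_symm_apply top
  have hpn : p.1 ≤ n := by have := p.2; omega
  have cross : ∀ i k : Fin (n + 1), i < p → p < k → (π k).1 < (π i).1 := by
    intro i k hi hk
    by_contra hle
    push_neg at hle
    have hik : i ≠ k := ne_of_lt (lt_trans hi hk)
    have hne : (π i).1 ≠ (π k).1 := fun hh =>
      absurd (π.injective (Fin.ext hh)) hik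
    have h1 : π i < π k := by rw [Fin.lt_def]; omega
    have hkp : π k < π p := by
      rw [hπp, Fin.lt_def]
      have hkn : (π k).1 ≤ n := by have := (π k).2; omega
      have : (π k).1 ≠ n := fun hh =>
        absurd (π.injective (Fin.ext (hh.trans (congrArg Fin.val hπp).symm)))
          (ne_of_gt hk)
      simp only [htop]
      omega
    exact hπ ⟨i, p, k, hi, hk, h1, hkp⟩
  have hlow : ∀ k : Fin (n + 1), p < k → (π k).1 < n - p.1 := by
    intro k hk
    have hsub : (Finset.Iic p).image π ⊆ Finset.Ioi (π k) := by
      intro v hv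
      obtain ⟨i, hi, rfl⟩ := Finset.mem_image.mp hv
      rw [Finset.mem_Iic] at hi
      rw [Finset.mem_Ioi]
      rcases lt_or_eq_of_le hi with h' | h'
      · rw [Fin.lt_def]; exact cross i k h' hk
      · subst h'
        rw [hπp, Fin.lt_def]
        have hkn : (π k).1 ≤ n := by have := (π k).2; omega
        have : (π k).1 ≠ n := fun hh => by
          have : π k = top := Fin.ext (by simp only [htop]; omega)
          exact absurd (π.injective (this.trans hπp.symm)) (ne_of_gt hk)
        simp only [htop]
        omega
    have hcard : (Finset.Iic p).card ≤ (Finset.Ioi (π k)).card := by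
      calc (Finset.Iic p).card = ((Finset.Iic p).image π).card :=
            (Finset.card_image_of_injective _ π.injective).symm
        _ ≤ _ := Finset.card_le_card hsub
    rw [Fin.card_Iic, Fin.card_Ioi] at hcard
    omega
  have hhigh : ∀ i : Fin (n + 1), i < p → n - p.1 ≤ (π i).1 := by
    intro i hi
    have hsub : (Finset.Ioi p).image π ⊆ Finset.Iio (π i) := by
      intro v hv
      obtain ⟨k, hk, rfl⟩ := Finset.mem_image.mp hv
      rw [Finset.mem_Ioi] at hk
      rw [Finset.mem_Iio, Fin.lt_def]
      exact cross i k hi hk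
    have hcard : (Finset.Ioi p).card ≤ (Finset.Iio (π i)).card := by
      calc (Finset.Ioi p).card = ((Finset.Ioi p).image π).card :=
            (Finset.card_image_of_injective _ π.injective).symm
        _ ≤ _ := Finset.card_le_card hsub
    rw [Fin.card_Ioi, Fin.card_Iio] at hcard
    omega
  -- value facts for positions < p
  have hvalL : ∀ i : Fin (n + 1), i < p → n - p.1 ≤ (π i).1 ∧ (π i).1 < n := by
    intro i hi
    refine ⟨hhigh i hi, ?_⟩
    have : (π i).1 ≠ n := fun hh => by
      have : π i = top := Fin.ext (by simp only [htop]; omega)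
      exact absurd (π.injective (this.trans hπp.symm)) (ne_of_lt hi)
    have := (π i).2
    omega
  set a := p.1 with ha
  set b := n - p.1 with hb
  have hfa : ∀ i : Fin a, (⟨i.1, by omega⟩ : Fin (n + 1)) < p := by
    intro i; rw [Fin.lt_def]; exact i.2
  let αf : Fin a → Fin a := fun i =>
    ⟨(π ⟨i.1, by omega⟩).1 - b, by
      have h1 := hvalL _ (hfa i)
      omega⟩
  have hαinj : Function.Injective αf := by
    intro i i' hh
    have hv := congrArg Fin.val hh
    simp only [αf] at hv
    have h1 := hvalL _ (hfa i)
    have h2 := hvalL _ (hfa i')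
    have : (π ⟨i.1, by omega⟩).1 = (π ⟨i'.1, by omega⟩).1 := by omega
    have := π.injective (Fin.ext this)
    have := congrArg Fin.val this
    simp only at this
    exact Fin.ext this
  have hfb : ∀ j : Fin b, p < (⟨a + 1 + j.1, by omega⟩ : Fin (n + 1)) := by
    intro j; rw [Fin.lt_def]; simp only; omega
  let βf : Fin b → Fin b := fun j =>
    ⟨(π ⟨a + 1 + j.1, by omega⟩).1, by
      have := hlow _ (hfb j)
      omega⟩
  have hβinj : Function.Injective βf := by
    intro j j' hh
    have hv := congrArg Fin.val hh
    simp only [βf] at hv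
    have := π.injective (Fin.ext hv)
    have := congrArg Fin.val this
    simp only at this
    exact Fin.ext (by omega)
  have hab : a + 1 + b = n + 1 := by omega
  refine ⟨a, b, hab, permOfInj αf hαinj, permOfInj βf hβinj, by omega, ?_, ?_, ?_⟩
  · rintro ⟨i, j, k, hij, hjk, h1, h2⟩
    have hbi := hvalL _ (hfa i)
    have hbj := hvalL _ (hfa j)
    have hbk := hvalL _ (hfa k)
    rw [Fin.lt_def] at hij hjk h1 h2
    have hα1 : ∀ i : Fin a, (permOfInj αf hαinj i).1 = (π ⟨i.1, by omega⟩).1 - b :=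
      fun _ => rfl
    simp only [hα1] at h1 h2
    refine hπ ⟨⟨i.1, by omega⟩, ⟨j.1, by omega⟩, ⟨k.1, by omega⟩, ?_, ?_, ?_, ?_⟩ <;>
      simp only [Fin.lt_def, Fin.mk_lt_mk] <;> omega
  · rintro ⟨i, j, k, hij, hjk, h1, h2⟩
    rw [Fin.lt_def] at hij hjk h1 h2
    have hβ1 : ∀ j : Fin b, (permOfInj βf hβinj j).1 = (π ⟨a + 1 + j.1, by omega⟩).1 :=
      fun _ => rfl
    simp only [hβ1] at h1 h2
    refine hπ ⟨⟨a + 1 + i.1, by omega⟩, ⟨a + 1 + j.1, by omega⟩, ⟨a + 1 + k.1, by omega⟩,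
      ?_, ?_, ?_, ?_⟩ <;> simp only [Fin.lt_def, Fin.mk_lt_mk] <;> omega
  · apply Equiv.ext
    intro x
    apply Fin.ext
    rw [castPerm_val]
    obtain ⟨i, hy⟩ | hy | ⟨j, hy⟩ := pos_cases (a := a) (b := b) ⟨x.1, by omega⟩
    · have hxi : x.1 = i.1 := by
        have := congrArg Fin.val hy; simpa [posL] using this
      rw [hy, glue_posL]
      have hα1 : (permOfInj αf hαinj i).1 = (π ⟨i.1, by omega⟩).1 - b := rfl
      rw [hα1]
      have hx' : (⟨i.1, by omega⟩ : Fin (n + 1)) = x := Fin.ext hxi.symm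
      rw [hx']
      have := hvalL x (by rw [Fin.lt_def]; have := i.2; omega)
      omega
    · have hxa : x.1 = a := by
        have := congrArg Fin.val hy; simpa [posM] using this
      have hxp : x = p := Fin.ext hxa
      rw [hy, glue_posM, hxp, hπp]
      simp only [htop]
      omega
    · have hxj : x.1 = a + 1 + j.1 := by
        have := congrArg Fin.val hy; simpa [posR] using this
      rw [hy, glue_posR]
      have hβ1 : (permOfInj βf hβinj j).1 = (π ⟨a + 1 + j.1, by omega⟩).1 := rfl
      rw [hβ1]
      have hx' : (⟨a + 1 + j.1, by omega⟩ : Fin (n + 1)) = x := Fin.ext hxj.symm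
      rw [hx']


lemma cast_glue_ne {n a b a' b' : ℕ} (hab : a + 1 + b = n + 1) (h'ab : a' + 1 + b' = n + 1)
    (hlt : a < a') (α : Perm (Fin a)) (β : Perm (Fin b)) (α' : Perm (Fin a'))
    (β' : Perm (Fin b')) : castPerm hab (glue α β) ≠ castPerm h'ab (glue α' β') := by
  intro E
  have hval := congrArg (fun σ : Perm (Fin (n + 1)) => (σ ⟨a, by omega⟩).1) E
  rw [castPerm_val, castPerm_val] at hval
  have e1 : (⟨a, by omega⟩ : Fin (a + 1 + b)) = posM a b := Fin.ext rfl
  have e2 : (⟨a, by omega⟩ : Fin (a' + 1 + b')) = posL a' b' ⟨a, hlt⟩ := Fin.ext rfl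
  rw [e1, glue_posM] at hval
  rw [e2, glue_posL] at hval
  have := (α' ⟨a, hlt⟩).2
  omega

noncomputable def permFS (n : ℕ) : Finset (Perm (Fin n)) :=
  (Set.toFinite {π : Perm (Fin n) | Avoids132P π}).toFinset

lemma mem_permFS {n : ℕ} {π : Perm (Fin n)} : π ∈ permFS n ↔ Avoids132P π := by
  simp [permFS, Set.Finite.mem_toFinset]

lemma perm_sum_succ {R : Type*} [AddCommMonoid R] (n : ℕ) (f : Perm (Fin (n + 1)) → R) :
    ∑ π ∈ permFS (n + 1), f π =
      ∑ ab ∈ antidiagonal n, ∑ pr ∈ permFS ab.1 ×ˢ permFS ab.2,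
        f (castPerm' (n + 1) (glue pr.1 pr.2)) := by
  rw [← Finset.sum_sigma (antidiagonal n) (fun ab => permFS ab.1 ×ˢ permFS ab.2)
    (fun x => f (castPerm' (n + 1) (glue x.2.1 x.2.2)))]
  refine (Finset.sum_bij (fun x _ => castPerm' (n + 1) (glue x.2.1 x.2.2)) ?_ ?_ ?_ ?_).symm
  · rintro ⟨⟨a, b⟩, α, β⟩ hx
    simp only [Finset.mem_sigma, Finset.HasAntidiagonal.mem_antidiagonal, Finset.mem_product, mem_permFS] at hx
    obtain ⟨hab, hα, hβ⟩ := hx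
    have h : a + 1 + b = n + 1 := by omega
    show castPerm' (n + 1) (glue α β) ∈ permFS (n + 1)
    rw [mem_permFS, castPerm'_eq h, avoids_castPerm]
    exact glue_avoids hα hβ
  · rintro ⟨⟨a, b⟩, α, β⟩ hx ⟨⟨a', b'⟩, α', β'⟩ hx' E
    simp only [Finset.mem_sigma, Finset.HasAntidiagonal.mem_antidiagonal, Finset.mem_product, mem_permFS]
      at hx hx'
    obtain ⟨hab, -, -⟩ := hx
    obtain ⟨hab', -, -⟩ := hx'
    have h : a + 1 + b = n + 1 := by omega
    have h' : a' + 1 + b' = n + 1 := by omega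
    replace E : castPerm' (n + 1) (glue α β) = castPerm' (n + 1) (glue α' β') := E
    rw [castPerm'_eq h, castPerm'_eq h'] at E
    have haa' : a = a' := by
      by_contra hne
      rcases lt_or_gt_of_ne hne with hlt | hlt
      · exact cast_glue_ne h h' hlt α β α' β' E
      · exact cast_glue_ne h' h hlt α' β' α β E.symm
    subst haa'
    have hbb' : b = b' := by omega
    subst hbb'
    have E' : glue α β = glue α' β' := castPerm_injective h E
    obtain ⟨rfl, rfl⟩ := glue_injective2 E'
    rfl
  · intro π hπ
    obtain ⟨a, b, h, α, β, habn, hα, hβ, hdec⟩ := decomp π (mem_permFS.mp hπ)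
    refine ⟨⟨(a, b), α, β⟩, ?_, ?_⟩
    · exact Finset.mem_sigma.mpr ⟨Finset.HasAntidiagonal.mem_antidiagonal.mpr habn,
        Finset.mem_product.mpr ⟨mem_permFS.mpr hα, mem_permFS.mpr hβ⟩⟩
    · show castPerm' (n + 1) (glue α β) = π
      rw [hdec, castPerm'_eq h]
  · intros; rfl

noncomputable def permSGF (m : ℕ) : PowerSeries (Polynomial ℚ) :=
  PowerSeries.mk fun n =>
    ∑ᶠ π ∈ {π : Perm (Fin n) | Avoids132P π},
      (Polynomial.X : Polynomial ℚ) ^ statP m π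

lemma coeff_permSGF (m n : ℕ) :
    PowerSeries.coeff n (permSGF m) = ∑ π ∈ permFS n, q ^ statP m π := by
  rw [permSGF, PowerSeries.coeff_mk]
  exact finsum_mem_eq_finite_toFinset_sum _ (Set.toFinite _)

lemma permFS_zero : permFS 0 = {1} := by
  ext σ
  rw [mem_permFS, Finset.mem_singleton]
  constructor
  · intro _; exact Subsingleton.elim σ 1
  · rintro - ⟨i, -⟩; exact i.elim0

lemma coeff_permSGF_zero (m : ℕ) : PowerSeries.coeff 0 (permSGF m) = 1 := by
  rw [coeff_permSGF, permFS_zero, Finset.sum_singleton]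
  have h3 : incCountP (1 : Perm (Fin 0)) 3 = 0 := incCountP_of_lt _ (by omega)
  have h2 : incCountP (1 : Perm (Fin 0)) 2 = 0 := incCountP_of_lt _ (by omega)
  simp [statP, h3, h2]

lemma coeff_permSGF_succ (m n : ℕ) :
    PowerSeries.coeff (n + 1) (permSGF m) =
      q ^ m.choose 2 * ∑ ab ∈ antidiagonal n,
        PowerSeries.coeff ab.1 (permSGF (m + 1)) *
          PowerSeries.coeff ab.2 (permSGF m) := by
  rw [coeff_permSGF, perm_sum_succ, Finset.mul_sum]
  refine Finset.sum_congr rfl ?_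
  rintro ⟨a, b⟩ hab
  rw [Finset.HasAntidiagonal.mem_antidiagonal] at hab
  have h : a + 1 + b = n + 1 := by omega
  rw [coeff_permSGF, coeff_permSGF, Finset.sum_mul_sum, ← Finset.sum_product', Finset.mul_sum]
  refine Finset.sum_congr rfl ?_
  rintro ⟨α, β⟩ -
  rw [castPerm'_eq h, statP_castPerm, stat_glue, pow_add, pow_add, mul_assoc]

lemma coeff_eq_all : ∀ n m : ℕ, PowerSeries.coeff n (shiftedTreeGF m) =
    PowerSeries.coeff n (permSGF m) := by
  intro n
  induction n using Nat.strong_induction_on with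
  | _ n ih =>
    intro m
    cases n with
    | zero => rw [coeff_shifted_zero, coeff_permSGF_zero]
    | succ n =>
      rw [coeff_shifted_succ, coeff_permSGF_succ]
      congr 1
      refine Finset.sum_congr rfl ?_
      rintro ⟨x, y⟩ hxy
      rw [Finset.HasAntidiagonal.mem_antidiagonal] at hxy
      rw [ih x (by omega) (m + 1), ih y (by omega) m]

lemma permSGF_zero_eq : permSGF 0 = permGF := by
  apply PowerSeries.ext
  intro n
  rw [permSGF, permGF, PowerSeries.coeff_mk, PowerSeries.coeff_mk]
  have h : ∀ π : Perm (Fin n), statP 0 π = incCountP π 3 := fun π => by simp [statP]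
  simp only [h]

lemma stmt16_part1 : shiftedTreeGF 0 = permGF := by
  have h1 : shiftedTreeGF 0 = permSGF 0 := PowerSeries.ext (fun n => coeff_eq_all n 0)
  rw [h1, permSGF_zero_eq]

end Stmt16Aux
/-- `F` equals the ordered-tree generating function with a
vertex at level `l` weighted `z·q^{C(l-1,2)}` (i.e. `F = H₀`), and the shifted
series satisfy the tree-decomposition recursion
`H_m = 1/(1 - z·q^{C(m,2)}·H_{m+1})`. -/

theorem stmt16 :
    shiftedTreeGF 0 = permGF ∧
    ∀ m : ℕ,
      shiftedTreeGF m *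
        (1 - PowerSeries.C ((Polynomial.X : Polynomial ℚ) ^ m.choose 2) *
          PowerSeries.X * shiftedTreeGF (m + 1)) = 1 := by
  exact ⟨Stmt16Aux.stmt16_part1, Stmt16Aux.stmt16_part2⟩
end
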